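/- arXiv:1204.5192 — 5 statements merged into one kernel-verified Lean document; each statement's English description precedes it below -/
import Mathlib

section
/- Let P be a path and let 𝒫₁,…,𝒫ₘ be families of subpaths of P. Let x₁,…,xₘ ≥ 0 be integers with k = x₁+⋯+xₘ. If for each i ∈ [1,m] there are k pairwise vertex-disjoint members of 𝒫ᵢ, then one can choose xᵢ members from each 𝒫ᵢ so that all k chosen subpaths are pairwise vertex-disjoint. -/
open SimpleGraph Set

/-- `H` is a minor of `G`: there is a model of `H` in `G` given by pairwise disjoint
branch sets, each inducing a connected subgraph, with edges of `H` realized by edges of `G`. -/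
def HasMinor {V W : Type*} (G : SimpleGraph V) (H : SimpleGraph W) : Prop :=
  ∃ f : W → Set V,
    (∀ w, ((G.induce (f w)).Connected)) ∧
    (Pairwise fun w w' => Disjoint (f w) (f w')) ∧
    ∀ ⦃w w'⦄, H.Adj w w' → ∃ a ∈ f w, ∃ b ∈ f w', G.Adj a b

/-- A path decomposition of the part of `G` inside the vertex set `A`, with bags `B 0, …, B (p-1)`. -/
def IsPathDecompOn {V : Type*} (G : SimpleGraph V) (A : Set V) (p : ℕ) (B : Fin p → Set V) : Prop :=
  (∀ i, B i ⊆ A) ∧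
  (∀ v ∈ A, ∃ i, v ∈ B i) ∧
  (∀ ⦃u v⦄, G.Adj u v → u ∈ A → v ∈ A → ∃ i, u ∈ B i ∧ v ∈ B i) ∧
  (∀ v (i j l : Fin p), i ≤ j → j ≤ l → v ∈ B i → v ∈ B l → v ∈ B j)

/-- The pathwidth of `G`: the least `t` such that `G` has a path decomposition of width `t`. -/
noncomputable def pathwidth {V : Type*} (G : SimpleGraph V) : ℕ :=
  sInf {t | ∃ p, ∃ B : Fin p → Set V, IsPathDecompOn G Set.univ p B ∧ ∀ i, (B i).ncard ≤ t + 1}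


private lemma between_of_connected {n : ℕ} {A : Set (Fin n)}
    (h : ((SimpleGraph.pathGraph n).induce A).Connected) :
    ∀ a ∈ A, ∀ b ∈ A, ∀ c : Fin n, a.val ≤ c.val → c.val ≤ b.val → c ∈ A := by
  have key : ∀ (u v : A) (w : ((pathGraph n).induce A).Walk u v) (c : Fin n),
      min (u : Fin n).val (v : Fin n).val ≤ c.val →
      c.val ≤ max (u : Fin n).val (v : Fin n).val → c ∈ A := by
    intro u v w
    induction w with
    | @nil z =>
      intro c h1 h2
      have : c = (z : Fin n) := Fin.ext (by omega)
      exact this ▸ z.2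
    | @cons z z' v hadj p ih =>
      intro c h1 h2
      have hadj' : (pathGraph n).Adj z z' := hadj
      rw [pathGraph_adj] at hadj'
      by_cases hc : min (z' : Fin n).val (v : Fin n).val ≤ c.val ∧
          c.val ≤ max (z' : Fin n).val (v : Fin n).val
      · exact ih c hc.1 hc.2
      · have : c = (z : Fin n) := Fin.ext (by omega)
        exact this ▸ z.2
  intro a ha b hb c h1 h2
  obtain ⟨w⟩ := h.preconnected ⟨a, ha⟩ ⟨b, hb⟩
  exact key _ _ w c (by simp; omega) (by simp; omega)

private noncomputable def mxv {n : ℕ} (A : Set (Fin n)) : ℕ := (Set.toFinite A).toFinset.sup Fin.val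

private lemma le_mxv {n : ℕ} {A : Set (Fin n)} {v : Fin n} (hv : v ∈ A) : v.val ≤ mxv A :=
  Finset.le_sup (by simpa using hv)

private lemma exists_mxv {n : ℕ} {A : Set (Fin n)} (h : A.Nonempty) : ∃ v ∈ A, v.val = mxv A := by
  obtain ⟨v, hv, he⟩ := Finset.exists_mem_eq_sup _ ((Set.toFinite A).toFinset_nonempty.mpr h) Fin.val
  exact ⟨v, by simpa using hv, he.symm⟩

private lemma aux {n m : ℕ} : ∀ (k : ℕ) (P : Fin m → Set (Set (Fin n))),
    (∀ i, ∀ A ∈ P i, ((SimpleGraph.pathGraph n).induce A).Connected) →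
    ∀ (x : Fin m → ℕ), k = ∑ i, x i →
    (∀ i, ∃ Q : Fin k → Set (Fin n), (∀ a, Q a ∈ P i) ∧
      Pairwise fun a b => Disjoint (Q a) (Q b)) →
    ∃ C : (i : Fin m) → Fin (x i) → Set (Fin n),
      (∀ i j, C i j ∈ P i) ∧
      ∀ i j i' j', (⟨i, j⟩ : Σ i, Fin (x i)) ≠ ⟨i', j'⟩ → Disjoint (C i j) (C i' j') := by
  intro k
  induction k with
  | zero =>
    intro P hsub x hk hdisj
    have hx : ∀ i, x i = 0 := fun i =>
      (Finset.sum_eq_zero_iff.mp hk.symm) i (Finset.mem_univ i)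
    exact ⟨fun i j => ∅, fun i j => absurd j.isLt (by simp [hx i]),
      fun i j => absurd j.isLt (by simp [hx i])⟩
  | succ k ih =>
    intro P hsub x hk hdisj
    choose Q hQmem hQdisj using hdisj
    have hne : ∀ i a, (Q i a).Nonempty := fun i a =>
      Set.nonempty_coe_sort.mp (hsub i _ (hQmem i a)).nonempty
    have hbet : ∀ i a, ∀ p ∈ Q i a, ∀ q ∈ Q i a, ∀ c : Fin n,
        p.val ≤ c.val → c.val ≤ q.val → c ∈ Q i a :=
      fun i a => between_of_connected (hsub i _ (hQmem i a))
    -- find minimizing pair among families with x i ≠ 0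
    have hex : ∃ i : Fin m, x i ≠ 0 := by
      by_contra hcon
      push_neg at hcon
      simp [hcon] at hk
    obtain ⟨i₁, hi₁⟩ := hex
    have hTne : ((Finset.univ.filter (fun i : Fin m => x i ≠ 0)) ×ˢ
        (Finset.univ : Finset (Fin (k + 1)))).Nonempty :=
      ⟨(i₁, 0), by simp [hi₁]⟩
    obtain ⟨⟨i₀, a₀⟩, hmem₀, hmin⟩ := Finset.exists_min_image _
      (fun p : Fin m × Fin (k + 1) => mxv (Q p.1 p.2)) hTne
    have hi₀ : x i₀ ≠ 0 := by
      simpa using (Finset.mem_product.mp hmem₀).1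
    have hmin' : ∀ i, x i ≠ 0 → ∀ a, mxv (Q i₀ a₀) ≤ mxv (Q i a) := by
      intro i hi a
      exact hmin (i, a) (by simp [hi])
    set R : Set (Fin n) := Q i₀ a₀ with hRdef
    obtain ⟨r, hrR, hrval⟩ := exists_mxv (show R.Nonempty from hne i₀ a₀)
    -- key claim: at most one member of each system meets R
    have claim : ∀ i, x i ≠ 0 → ∃ a₂ : Fin (k + 1), ∀ a, a ≠ a₂ → Disjoint (Q i a) R := by
      intro i hi
      by_cases hex2 : ∃ a, ¬ Disjoint (Q i a) R
      · obtain ⟨a₂, ha₂⟩ := hex2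
        refine ⟨a₂, fun a hanea => ?_⟩
        by_contra hnd
        have hrmem : ∀ b : Fin (k + 1), ¬ Disjoint (Q i b) R → r ∈ Q i b := by
          intro b hndb
          obtain ⟨p, hpQ, hpR⟩ := Set.not_disjoint_iff.mp hndb
          obtain ⟨q, hqQ, hqval⟩ := exists_mxv (hne i b)
          have h1 : p.val ≤ r.val := hrval ▸ le_mxv hpR
          have h2 : r.val ≤ q.val := by
            have := hmin' i hi b
            omega
          exact hbet i b p hpQ q hqQ r h1 h2
        exact Set.disjoint_left.mp (hQdisj i hanea) (hrmem a hnd) (hrmem a₂ ha₂)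
      · push_neg at hex2
        exact ⟨0, fun a _ => hex2 a⟩
    choose astar hastar using claim
    -- new families and targets
    set P' : Fin m → Set (Set (Fin n)) :=
      fun i => if x i = 0 then P i else {A ∈ P i | Disjoint A R} with hP'def
    have hP'sub : ∀ i, P' i ⊆ P i := by
      intro i A hA
      by_cases hi : x i = 0
      · simpa [hP'def, hi] using hA
      · exact ((by simpa [hP'def, hi] using hA : A ∈ P i ∧ Disjoint A R)).1
    have hP'disj : ∀ i, x i ≠ 0 → ∀ A ∈ P' i, Disjoint A R := by
      intro i hi A hA
      exact ((by simpa [hP'def, hi] using hA : A ∈ P i ∧ Disjoint A R)).2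
    set x' : Fin m → ℕ := fun i => if i = i₀ then x i₀ - 1 else x i with hx'def
    have hx'ne : ∀ i, i ≠ i₀ → x' i = x i := fun i h => if_neg h
    have hx'i₀ : x' i₀ = x i₀ - 1 := if_pos rfl
    have hk' : k = ∑ i, x' i := by
      have h1 : ∑ i, x i = x i₀ + ∑ i ∈ Finset.univ.erase i₀, x i :=
        (Finset.add_sum_erase _ x (Finset.mem_univ i₀)).symm
      have h2 : ∑ i, x' i = x' i₀ + ∑ i ∈ Finset.univ.erase i₀, x' i :=
        (Finset.add_sum_erase _ x' (Finset.mem_univ i₀)).symm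
      have h3 : ∑ i ∈ Finset.univ.erase i₀, x' i = ∑ i ∈ Finset.univ.erase i₀, x i :=
        Finset.sum_congr rfl (fun i hi => hx'ne i (Finset.ne_of_mem_erase hi))
      omega
    have hdisj' : ∀ i, ∃ Q' : Fin k → Set (Fin n), (∀ a, Q' a ∈ P' i) ∧
        Pairwise fun a b => Disjoint (Q' a) (Q' b) := by
      intro i
      by_cases hi : x i = 0
      · refine ⟨fun b => Q i b.castSucc, fun b => by simp [hP'def, hi, hQmem], ?_⟩
        exact fun b b' hbb' => hQdisj i (fun hc => hbb' (Fin.castSucc_injective _ hc))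
      · refine ⟨fun b => Q i ((astar i hi).succAbove b), fun b => ?_, ?_⟩
        · have : Q i ((astar i hi).succAbove b) ∈ P i ∧
              Disjoint (Q i ((astar i hi).succAbove b)) R :=
            ⟨hQmem i _, hastar i hi _ (Fin.succAbove_ne _ b)⟩
          simpa [hP'def, hi] using this
        · exact fun b b' hbb' =>
            hQdisj i (fun hc => hbb' (Fin.succAbove_right_injective hc))
    obtain ⟨C', hC'mem, hC'disj⟩ := ih P' (fun i A hA => hsub i A (hP'sub i hA)) x' hk' hdisj'
    have hdisjR : ∀ i (j : Fin (x' i)), Disjoint (C' i j) R := by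
      intro i j
      have hxi : x i ≠ 0 := by
        intro h0
        have hx'0 : x' i = 0 := by
          rcases eq_or_ne i i₀ with h | h
          · exact absurd (h ▸ h0) hi₀
          · rw [hx'ne i h]; exact h0
        exact absurd j.isLt (by omega)
      exact hP'disj i hxi _ (hC'mem i j)
    have hlt : ∀ (i : Fin m) (j : Fin (x i)), i ≠ i₀ → (j : ℕ) < x' i := by
      intro i j h
      rw [hx'ne i h]; exact j.isLt
    obtain ⟨C, hchar⟩ : ∃ C : (i : Fin m) → Fin (x i) → Set (Fin n), ∀ (i : Fin m) (j : Fin (x i)),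
        (∃ jj : Fin (x' i), (jj : ℕ) = (j : ℕ) ∧ C i j = C' i jj) ∨
        (i = i₀ ∧ (j : ℕ) = x' i₀ ∧ C i j = R) := by
      refine ⟨fun i j => dite (i = i₀)
        (fun h => dite ((j : ℕ) < x' i₀) (fun h2 => C' i₀ ⟨j, h2⟩) (fun _ => R))
        (fun h => C' i ⟨j, hlt i j h⟩), ?_⟩
      intro i j
      dsimp only
      by_cases h : i = i₀
      · subst h
        by_cases h2 : (j : ℕ) < x' i
        · exact Or.inl ⟨⟨j, h2⟩, rfl, by rw [dif_pos rfl, dif_pos h2]⟩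
        · refine Or.inr ⟨rfl, ?_, by rw [dif_pos rfl, dif_neg h2]⟩
          have := j.isLt
          omega
      · exact Or.inl ⟨⟨j, hlt i j h⟩, rfl, by rw [dif_neg h]⟩
    have hsig : ∀ {i i' : Fin m} {j : Fin (x i)} {j' : Fin (x i')},
        i = i' → (j : ℕ) = (j' : ℕ) → (⟨i, j⟩ : Σ i, Fin (x i)) = ⟨i', j'⟩ := by
      rintro i _ j j' rfl hv
      exact congrArg _ (Fin.ext hv)
    have hsig2 : ∀ {i i' : Fin m} {j : Fin (x' i)} {j' : Fin (x' i')},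
        (⟨i, j⟩ : Σ i, Fin (x' i)) = ⟨i', j'⟩ → i = i' ∧ (j : ℕ) = (j' : ℕ) := by
      rintro i i' j j' h
      obtain ⟨h1, h2⟩ := Sigma.mk.inj_iff.mp h
      subst h1
      exact ⟨rfl, congrArg Fin.val (eq_of_heq h2)⟩
    refine ⟨C, ?_, ?_⟩
    · intro i j
      rcases hchar i j with ⟨jj, _, hCeq⟩ | ⟨hii, _, hCeq⟩
      · rw [hCeq]; exact hP'sub i (hC'mem i jj)
      · rw [hCeq, hRdef]; exact hii ▸ hQmem i₀ a₀
    · intro i j i' j' hne'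
      rcases hchar i j with ⟨jj, hjj, hCeq⟩ | ⟨hii, hjv, hCeq⟩ <;>
        rcases hchar i' j' with ⟨jj', hjj', hCeq'⟩ | ⟨hii', hjv', hCeq'⟩
      · rw [hCeq, hCeq']
        refine hC'disj i jj i' jj' (fun heq => ?_)
        obtain ⟨h1, h2⟩ := hsig2 heq
        exact hne' (hsig h1 (by omega))
      · rw [hCeq, hCeq']
        exact hdisjR i jj
      · rw [hCeq, hCeq']
        exact (hdisjR i' jj').symm
      · exact absurd (hsig (hii.trans hii'.symm) (by omega)) hne'

/-- Lemma 2 (Robertson–Seymour (8.6)): selecting disjoint subpaths from several families. -/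
theorem disjoint_subpaths_selection (n m k : ℕ) (P : Fin m → Set (Set (Fin n)))
    (hsub : ∀ i, ∀ A ∈ P i, ((SimpleGraph.pathGraph n).induce A).Connected)
    (x : Fin m → ℕ) (hk : k = ∑ i, x i)
    (hdisj : ∀ i, ∃ Q : Fin k → Set (Fin n), (∀ a, Q a ∈ P i) ∧
      Pairwise fun a b => Disjoint (Q a) (Q b)) :
    ∃ C : (i : Fin m) → Fin (x i) → Set (Fin n),
      (∀ i j, C i j ∈ P i) ∧
      ∀ i j i' j', (⟨i, j⟩ : Σ i, Fin (x i)) ≠ ⟨i', j'⟩ → Disjoint (C i j) (C i' j') := by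
  exact aux k P hsub x hk hdisj
end

section
/- Let G be a graph of pathwidth at most t with a set S of k ≥ 0 marked vertices. Then G has a separation (G₁, G₂) with |V(G₁)| ≥ (|V(G)| − k(t+1))/(k+1) such that no vertex of V(G₁) − V(G₂) is marked, and G₁ admits a path decomposition B₁,…,Bₚ of width at most t with V(G₁) ∩ V(G₂) = B₁ ∪ Bₚ. -/
open SimpleGraph Set

/-- A `t`-sep of `G`: a separation `(A, B)` (every edge lies inside `A` or inside `B`)
such that `G[A]` has a path decomposition of width at most `t` whose first and last bags
union to `A ∩ B`. -/
def IsTSep {V : Type*} (G : SimpleGraph V) (t : ℕ) (A B : Set V) : Prop :=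
  A ∪ B = Set.univ ∧
  (∀ ⦃u v⦄, G.Adj u v → (u ∈ A ∧ v ∈ A) ∨ (u ∈ B ∧ v ∈ B)) ∧
  ∃ p, ∃ hp : 0 < p, ∃ Bags : Fin p → Set V,
    IsPathDecompOn G A p Bags ∧ (∀ i, (Bags i).ncard ≤ t + 1) ∧
    A ∩ B = Bags ⟨0, hp⟩ ∪ Bags ⟨p - 1, Nat.sub_lt hp Nat.one_pos⟩

/-- If `G` has pathwidth at most `t` and a set `S` of `k` marked vertices, then `G` has a
`t`-sep `(A, B)` with `|A| ≥ (|V(G)| - k(t+1))/(k+1)` and no marked vertex in `A \ B`. -/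
theorem tsep_avoiding_marked {V : Type} [Fintype V] (G : SimpleGraph V) (t k : ℕ)
    (hpw : pathwidth G ≤ t) (S : Set V) (hS : S.ncard = k) :
    ∃ A B : Set V, IsTSep G t A B ∧
      ((Fintype.card V : ℝ) - k * (t + 1)) / (k + 1) ≤ (A.ncard : ℝ) ∧
      ∀ v ∈ A \ B, v ∉ S := by
  classical
  by_cases hle : (Fintype.card V : ℝ) - k * (t + 1) ≤ 0
  · -- degenerate case: the trivial separation (∅, univ)
    refine ⟨∅, Set.univ, ⟨by simp, fun u v _ => Or.inr ⟨trivial, trivial⟩,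
      1, Nat.one_pos, fun _ => ∅,
      ⟨fun _ => le_rfl, fun v hv => absurd hv (by simp),
        fun u v _ hu _ => absurd hu (by simp), fun v i j m _ _ h _ => h⟩,
      fun _ => by simp, by simp⟩, ?_, by simp⟩
    have : ((Fintype.card V : ℝ) - k * (t + 1)) / (k + 1) ≤ 0 :=
      div_nonpos_of_nonpos_of_nonneg hle (by positivity)
    simpa using this
  push_neg at hle
  -- extract a path decomposition of width `pathwidth G ≤ t`
  have hne : (Fintype.card V) ∈
      {t | ∃ p, ∃ B : Fin p → Set V, IsPathDecompOn G Set.univ p B ∧ ∀ i, (B i).ncard ≤ t + 1} := by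
    refine ⟨1, fun _ => Set.univ,
      ⟨fun _ => le_rfl, fun v _ => ⟨0, trivial⟩, fun u v _ _ _ => ⟨0, trivial, trivial⟩,
        fun v i j m _ _ _ _ => trivial⟩, fun _ => ?_⟩
    rw [Set.ncard_univ, Nat.card_eq_fintype_card]
    omega
  have hmem := Nat.sInf_mem (⟨_, hne⟩ : Set.Nonempty _)
  obtain ⟨p, Bg, hdec, hw⟩ := hmem
  obtain ⟨hsub, hcov, hedge, hconv⟩ := hdec
  have hw' : ∀ i, (Bg i).ncard ≤ t + 1 := by
    intro i
    have h1 := hw i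
    have h2 : sInf {t | ∃ p, ∃ B : Fin p → Set V, IsPathDecompOn G Set.univ p B ∧
        ∀ i, (B i).ncard ≤ t + 1} ≤ t := hpw
    exact h1.trans (Nat.add_le_add_right h2 1)
  -- V is nonempty
  have hn : 0 < Fintype.card V := by
    rcases Nat.eq_zero_or_pos (Fintype.card V) with h | h
    · rw [h] at hle
      have h1 : (0:ℝ) ≤ (k:ℝ) * ((t:ℝ)+1) := by positivity
      push_cast at hle
      linarith
    · exact h
  obtain ⟨v0⟩ := Fintype.card_pos_iff.mp hn
  -- choose a bag for every vertex
  choose jdx hjdx using fun v => hcov v trivial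
  have hp : 0 < p := (jdx v0).pos
  -- the split indices
  set I : Finset (Fin p) := (S.toFinite.toFinset).image jdx with hI
  have hIcard : I.card ≤ k := by
    refine (Finset.card_image_le).trans ?_
    rw [← Set.ncard_eq_toFinset_card]
    omega
  -- vertices avoiding all split bags
  set U : Finset V := Finset.univ.filter (fun v => ∀ i ∈ I, v ∉ Bg i) with hU
  have hUc : (Fintype.card V : ℝ) - k * (t + 1) ≤ (U.card : ℝ) := by
    have hsubc : Uᶜ ⊆ I.biUnion (fun i => (Bg i).toFinset) := by
      intro v hv
      simp only [hU, Finset.mem_compl, Finset.mem_filter, Finset.mem_univ, true_and,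
        not_forall] at hv
      obtain ⟨i, hi, hvi⟩ := hv
      simp only [Finset.mem_biUnion, Set.mem_toFinset]
      exact ⟨i, hi, by simpa using hvi⟩
    have h1 : Uᶜ.card ≤ k * (t + 1) := by
      calc Uᶜ.card ≤ (I.biUnion (fun i => (Bg i).toFinset)).card := Finset.card_le_card hsubc
        _ ≤ ∑ i ∈ I, ((Bg i).toFinset).card := Finset.card_biUnion_le
        _ ≤ ∑ _i ∈ I, (t + 1) := Finset.sum_le_sum (fun i _ => by
            rw [← Set.ncard_eq_toFinset_card']; exact hw' i)
        _ = I.card * (t + 1) := by rw [Finset.sum_const, smul_eq_mul]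
        _ ≤ k * (t + 1) := Nat.mul_le_mul_right _ hIcard
    have h2 : U.card + Uᶜ.card = Fintype.card V := Finset.card_add_card_compl U
    have : Fintype.card V ≤ U.card + k * (t + 1) := by omega
    have := (Nat.cast_le (α := ℝ)).mpr this
    push_cast at this ⊢
    linarith
  -- the class function
  set f : V → ℕ := fun v => (I.filter (· < jdx v)).card with hf
  -- key: for v ∈ U, all bags containing v give the same count of split indices below
  have key : ∀ v ∈ U, ∀ j : Fin p, v ∈ Bg j → (I.filter (· < j)).card = f v := by
    intro v hv j hvj
    simp only [hU, Finset.mem_filter, Finset.mem_univ, true_and] at hv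
    have : I.filter (· < j) = I.filter (· < jdx v) := by
      ext i
      simp only [Finset.mem_filter, and_congr_right_iff]
      intro hiI
      constructor
      · intro hij
        by_contra h
        push_neg at h
        exact hv i hiI (hconv v (jdx v) i j h (le_of_lt hij) (hjdx v) hvj)
      · intro hij
        by_contra h
        push_neg at h
        exact hv i hiI (hconv v j i (jdx v) h (le_of_lt hij) hvj (hjdx v))
    rw [this]
  have hfk : ∀ v ∈ U, f v ∈ Finset.range (k + 1) := by
    intro v _
    simp only [Finset.mem_range]
    have : f v ≤ I.card := Finset.card_filter_le _ _
    omega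
  have hsum : U.card = ∑ c ∈ Finset.range (k + 1), (U.filter (fun v => f v = c)).card :=
    Finset.card_eq_sum_card_fiberwise hfk
  obtain ⟨c, _, hcmax⟩ := Finset.exists_max_image (Finset.range (k + 1))
    (fun c => (U.filter (fun v => f v = c)).card) ⟨0, by simp⟩
  set W : Finset V := U.filter (fun v => f v = c) with hWdef
  have hWU : U.card ≤ (k + 1) * W.card := by
    calc U.card = ∑ c' ∈ Finset.range (k + 1), (U.filter (fun v => f v = c')).card := hsum
      _ ≤ (Finset.range (k + 1)).card • W.card :=
          Finset.sum_le_card_nsmul _ _ _ (fun c' hc' => hcmax c' hc')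
      _ = (k + 1) * W.card := by simp [smul_eq_mul]
  have hUpos : 0 < U.card := by
    rcases Nat.eq_zero_or_pos U.card with h | h
    · rw [h] at hUc
      push_cast at hUc
      linarith
    · exact h
  have hWpos : 0 < W.card := by
    rcases Nat.eq_zero_or_pos W.card with h | h
    · rw [h, Nat.mul_zero] at hWU; omega
    · exact h
  obtain ⟨w0, hw0⟩ := Finset.card_pos.mp hWpos
  -- the indices of bags meeting W
  set K : Finset (Fin p) := Finset.univ.filter (fun j => ∃ v ∈ W, v ∈ Bg j) with hKdef
  have hK : K.Nonempty := ⟨jdx w0, by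
    simp only [hKdef, Finset.mem_filter, Finset.mem_univ, true_and]
    exact ⟨w0, hw0, hjdx w0⟩⟩
  set l : Fin p := K.min' hK with hl
  set r : Fin p := K.max' hK with hr
  have hlr : l ≤ r := K.min'_le _ (K.max'_mem hK)
  have hKc : ∀ j ∈ K, (I.filter (· < j)).card = c ∧ j ∉ I := by
    intro j hj
    simp only [hKdef, Finset.mem_filter, Finset.mem_univ, true_and] at hj
    obtain ⟨v, hvW, hvj⟩ := hj
    have hvU : v ∈ U := (Finset.mem_filter.mp hvW).1
    have hvf : f v = c := (Finset.mem_filter.mp hvW).2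
    refine ⟨by rw [key v hvU j hvj, hvf], ?_⟩
    intro hjI
    have := (Finset.mem_filter.mp hvU).2
    exact this j hjI hvj
  -- no split index in [l, r]
  have hIno : ∀ i ∈ I, ¬(l ≤ i ∧ i ≤ r) := by
    rintro i hiI ⟨hli, hir⟩
    have hlK := K.min'_mem hK
    have hrK := K.max'_mem hK
    have hli' : l < i := lt_of_le_of_ne hli (fun h => (hKc l hlK).2 (h ▸ hiI))
    have hir' : i < r := lt_of_le_of_ne hir (fun h => (hKc r hrK).2 (h.symm ▸ hiI))
    have hss : I.filter (· < l) ⊂ I.filter (· < r) := by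
      refine ⟨Finset.filter_subset_filter _ (le_refl I) |>.trans ?_, ?_⟩ <;> try skip
      · intro x hx
        simp only [Finset.mem_filter] at hx ⊢
        exact ⟨hx.1, lt_of_lt_of_le hx.2 hlr⟩
      · intro hcon
        have : i ∈ I.filter (· < r) := Finset.mem_filter.mpr ⟨hiI, hir'⟩
        have := hcon this
        simp only [Finset.mem_filter] at this
        exact absurd this.2 (not_lt.mpr (le_of_lt hli'))
    have := Finset.card_lt_card hss
    rw [(hKc l (K.min'_mem hK)).1, (hKc r (K.max'_mem hK)).1] at this
    omega
  -- the separation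
  set A : Set V := {v | ∃ j : Fin p, l ≤ j ∧ j ≤ r ∧ v ∈ Bg j} with hA
  set Bs : Set V := Aᶜ ∪ (Bg l ∪ Bg r) with hBs
  have hBlA : Bg l ⊆ A := fun v hv => ⟨l, le_rfl, hlr, hv⟩
  have hBrA : Bg r ⊆ A := fun v hv => ⟨r, hlr, le_rfl, hv⟩
  have H2 : ∀ v ∈ A, ∀ j : Fin p, v ∈ Bg j → ¬(l ≤ j ∧ j ≤ r) → v ∈ Bg l ∨ v ∈ Bg r := by
    rintro v ⟨j', hlj', hj'r, hvj'⟩ j hvj hnot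
    rcases not_and_or.mp hnot with h | h
    · left
      exact hconv v j l j' (le_of_not_ge h) hlj' hvj hvj'
    · right
      exact hconv v j' r j hj'r (le_of_not_ge h) hvj' hvj
  have hrp : (r : ℕ) < p := r.isLt
  have hlrn : (l : ℕ) ≤ (r : ℕ) := hlr
  refine ⟨A, Bs, ⟨?_, ?_, ?_⟩, ?_, ?_⟩
  · -- A ∪ Bs = univ
    ext v
    simp only [hBs, Set.mem_union, Set.mem_compl_iff, Set.mem_univ, iff_true]
    tauto
  · -- edge condition
    intro u v huv
    obtain ⟨j, hu, hv⟩ := hedge huv trivial trivial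
    by_cases hj : l ≤ j ∧ j ≤ r
    · exact Or.inl ⟨⟨j, hj.1, hj.2, hu⟩, ⟨j, hj.1, hj.2, hv⟩⟩
    · refine Or.inr ⟨?_, ?_⟩
      · by_cases hA' : u ∈ A
        · rcases H2 u hA' j hu hj with h | h
          · exact Or.inr (Or.inl h)
          · exact Or.inr (Or.inr h)
        · exact Or.inl hA'
      · by_cases hA' : v ∈ A
        · rcases H2 v hA' j hv hj with h | h
          · exact Or.inr (Or.inl h)
          · exact Or.inr (Or.inr h)
        · exact Or.inl hA'
  · -- the path decomposition of G[A]
    refine ⟨(r : ℕ) - (l : ℕ) + 1, Nat.succ_pos _,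
      fun i => Bg ⟨(l : ℕ) + i.val, by have := i.isLt; omega⟩, ⟨?_, ?_, ?_, ?_⟩, ?_, ?_⟩
    · -- bags ⊆ A
      intro i v hv
      refine ⟨⟨(l : ℕ) + i.val, by have := i.isLt; omega⟩, ?_, ?_, hv⟩
      · rw [Fin.le_def]; simp
      · rw [Fin.le_def]; simp; have := i.isLt; omega
    · -- cover
      rintro v ⟨j, hlj, hjr, hvj⟩
      rw [Fin.le_def] at hlj hjr
      refine ⟨⟨(j : ℕ) - (l : ℕ), by omega⟩, ?_⟩
      convert hvj using 2
      apply Fin.ext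
      simp
      omega
    · -- edges
      intro u v huv hu hv
      obtain ⟨j, hju, hjv⟩ := hedge huv trivial trivial
      by_cases hj : l ≤ j ∧ j ≤ r
      · rw [Fin.le_def] at hj
        refine ⟨⟨(j : ℕ) - (l : ℕ), by omega⟩, ?_, ?_⟩
        · convert hju using 2
          apply Fin.ext; simp; omega
        · convert hjv using 2
          apply Fin.ext; simp; omega
      · have hBgl : ∀ x, x ∈ A → x ∈ Bg j → j ≤ l → x ∈ Bg l := by
          rintro x ⟨j', hlj', hj'r, hx'⟩ hxj hjl
          exact hconv x j l j' hjl hlj' hxj hx'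
        have hBgr : ∀ x, x ∈ A → x ∈ Bg j → r ≤ j → x ∈ Bg r := by
          rintro x ⟨j', hlj', hj'r, hx'⟩ hxj hrj
          exact hconv x j' r j hj'r hrj hx' hxj
        rcases not_and_or.mp hj with h | h
        · have hjl : j ≤ l := le_of_not_ge h
          refine ⟨⟨0, by omega⟩, ?_, ?_⟩
          · convert hBgl u hu hju hjl using 2 <;> (apply Fin.ext; simp)
          · convert hBgl v hv hjv hjl using 2 <;> (apply Fin.ext; simp)
        · have hrj : r ≤ j := le_of_not_ge h
          refine ⟨⟨(r : ℕ) - (l : ℕ), by omega⟩, ?_, ?_⟩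
          · convert hBgr u hu hju hrj using 2 <;> (apply Fin.ext; simp; omega)
          · convert hBgr v hv hjv hrj using 2 <;> (apply Fin.ext; simp; omega)
    · -- convexity
      intro v i j m hij hjm hvi hvm
      exact hconv v _ _ _ (by rw [Fin.le_def] at hij ⊢; simpa using hij)
        (by rw [Fin.le_def] at hjm ⊢; simpa using hjm) hvi hvm
    · -- widths
      intro i
      exact hw' _
    · -- A ∩ Bs = first ∪ last
      have hmain : A ∩ Bs = Bg l ∪ Bg r := by
        ext v
        simp only [hBs, Set.mem_inter_iff, Set.mem_union, Set.mem_compl_iff]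
        constructor
        · rintro ⟨hvA, h | h⟩
          · exact absurd hvA h
          · exact h
        · rintro (h | h)
          · exact ⟨hBlA h, Or.inr (Or.inl h)⟩
          · exact ⟨hBrA h, Or.inr (Or.inr h)⟩
      rw [hmain]
      congr 1 <;> apply congrArg Bg <;> apply Fin.ext <;> simp <;> omega
  · -- cardinality
    have hWA : ∀ v ∈ W, v ∈ A := by
      intro v hv
      have hvK : jdx v ∈ K := by
        simp only [hKdef, Finset.mem_filter, Finset.mem_univ, true_and]
        exact ⟨v, hv, hjdx v⟩
      exact ⟨jdx v, K.min'_le _ hvK, K.le_max' _ hvK, hjdx v⟩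
    have hWcard : W.card ≤ A.ncard := by
      rw [Set.ncard_eq_toFinset_card']
      exact Finset.card_le_card (fun v hv => Set.mem_toFinset.mpr (hWA v hv))
    have hk1 : (0 : ℝ) < (k : ℝ) + 1 := by positivity
    calc ((Fintype.card V : ℝ) - k * (t + 1)) / (k + 1)
        ≤ (U.card : ℝ) / (k + 1) := by gcongr
      _ ≤ (W.card : ℝ) := by
          rw [div_le_iff₀ hk1]
          have := (Nat.cast_le (α := ℝ)).mpr hWU
          push_cast at this
          linarith
      _ ≤ (A.ncard : ℝ) := by exact_mod_cast hWcard
  · -- no marked vertex in A \ Bs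
    rintro v ⟨hvA, hvB⟩ hvS
    simp only [hBs, Set.mem_union, Set.mem_compl_iff, not_or] at hvB
    obtain ⟨-, hvl, hvr⟩ := hvB
    have hvI : jdx v ∈ I := by
      simp only [hI, Finset.mem_image]
      exact ⟨v, Set.Finite.mem_toFinset _ |>.mpr hvS, rfl⟩
    have := H2 v hvA (jdx v) (hjdx v) (hIno _ hvI)
    tauto
end

section
/- Let (G₁, G₂) be a t-sep of a graph G with k ≥ 0 marked vertices, and let ℓ be an integer with 1 ≤ ℓ ≤ ⌈|V(G₁)|/(k+1)⌉. Then there exists a t-sep (G₁′, G₂′) of G with G₁′ ⊆ G₁, G₂ ⊆ G₂′, |V(G₁′)| = ℓ, and no marked vertex in V(G₁′) − V(G₂′). -/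
open SimpleGraph Set

lemma exists_sorted_enum {V : Type} [Fintype V] (A : Set V) (f : V → ℕ) (n : ℕ)
    (hn : A.ncard = n) (hn0 : 1 ≤ n) :
    ∃ (σ : ℕ → V) (rnk : V → ℕ),
      (∀ m, m < n → σ m ∈ A) ∧
      (∀ m m', m < n → m' < n → σ m = σ m' → m = m') ∧
      (∀ v ∈ A, rnk v < n ∧ σ (rnk v) = v) ∧
      (∀ m, m < n → rnk (σ m) = m) ∧
      (∀ m m', m ≤ m' → m' < n → f (σ m) ≤ f (σ m')) := by
  classical
  set N := Fintype.card V with hN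
  set eF := Fintype.equivFin V with heF
  set key : V → ℕ := fun v => f v * N + (eF v : ℕ) with hkey
  have hApos : 0 < A.ncard := by omega
  have hNpos : 0 < N := by
    obtain ⟨v, -⟩ := (Set.ncard_pos (Set.toFinite A)).mp hApos
    exact Fintype.card_pos_iff.mpr ⟨v⟩
  have hkeylt : ∀ u v, f u < f v → key u < key v := by
    intro u v huv
    have h1 : (eF u : ℕ) < N := (eF u).isLt
    calc f u * N + (eF u : ℕ) < f u * N + N := by omega
    _ = (f u + 1) * N := by ring
    _ ≤ f v * N := Nat.mul_le_mul_right N huv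
    _ ≤ key v := Nat.le_add_right _ _
  have hkeyinj : Function.Injective key := by
    intro u v huv
    rcases lt_trichotomy (f u) (f v) with h | h | h
    · exact absurd huv (Nat.ne_of_lt (hkeylt u v h))
    · have : (eF u : ℕ) = (eF v : ℕ) := by
        simp only [hkey, h] at huv
        omega
      exact eF.injective (Fin.ext this)
    · exact absurd huv.symm (Nat.ne_of_lt (hkeylt v u h))
  set F : Finset ℕ := (A.toFinite.toFinset).image key with hF
  have hFcard : F.card = n := by
    rw [hF, Finset.card_image_of_injective _ hkeyinj, ← Set.ncard_eq_toFinset_card _ A.toFinite, hn]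
  set oiso := F.orderIsoOfFin hFcard with hoiso
  have hNe : Nonempty V := Fintype.card_pos_iff.mp hNpos
  set σF : Fin n → V := fun m => Function.invFun key ((oiso m : ℕ)) with hσF
  have hkeyσ : ∀ m : Fin n, key (σF m) = (oiso m : ℕ) ∧ σF m ∈ A := by
    intro m
    have hmem : (oiso m : ℕ) ∈ F := (oiso m).2
    obtain ⟨v, hv, hveq⟩ := Finset.mem_image.mp hmem
    have hvA : v ∈ A := (Set.Finite.mem_toFinset _).mp hv
    have h1 : key (σF m) = (oiso m : ℕ) := Function.invFun_eq ⟨v, hveq⟩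
    refine ⟨h1, ?_⟩
    have : σF m = v := hkeyinj (by rw [h1, hveq])
    rw [this]; exact hvA
  have hσinj : Function.Injective σF := by
    intro m m' he
    have h1 := (hkeyσ m).1
    have h2 := (hkeyσ m').1
    rw [he, h2] at h1
    exact oiso.injective (Subtype.ext h1.symm)
  have hσsurj : ∀ v ∈ A, ∃ m : Fin n, σF m = v := by
    intro v hv
    have : key v ∈ F := by
      rw [hF, Finset.mem_image]
      exact ⟨v, (Set.Finite.mem_toFinset _).mpr hv, rfl⟩
    obtain ⟨m, hm⟩ := oiso.surjective ⟨key v, this⟩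
    refine ⟨m, hkeyinj ?_⟩
    rw [(hkeyσ m).1, hm]
  have hninst : Nonempty (Fin n) := ⟨⟨0, hn0⟩⟩
  set rnkF : V → Fin n := Function.invFun σF with hrnkF
  have hrnkσ : ∀ m : Fin n, rnkF (σF m) = m := fun m => Function.leftInverse_invFun hσinj m
  have hσrnk : ∀ v ∈ A, σF (rnkF v) = v := by
    intro v hv
    obtain ⟨m, hm⟩ := hσsurj v hv
    rw [← hm, hrnkσ]
  refine ⟨fun m => σF ⟨min m (n-1), by omega⟩, fun v => (rnkF v : ℕ), ?_, ?_, ?_, ?_, ?_⟩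
  · intro m hm
    exact (hkeyσ _).2
  · intro m m' hm hm' he
    have h2 := hσinj he
    simp only [Fin.mk.injEq] at h2
    omega
  · intro v hv
    refine ⟨(rnkF v).isLt, ?_⟩
    have h3 : (⟨min ((rnkF v : ℕ)) (n-1), by omega⟩ : Fin n) = rnkF v := by
      apply Fin.ext
      have := (rnkF v).isLt
      simp only []
      omega
    exact (congrArg σF h3).trans (hσrnk v hv)
  · intro m hm
    have h3 : (⟨min m (n-1), by omega⟩ : Fin n) = ⟨m, hm⟩ := by
      apply Fin.ext; simp only []; omega
    have h5 : rnkF (σF (⟨m, hm⟩ : Fin n)) = ⟨m, hm⟩ := hrnkσ _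
    exact (congrArg (fun x : Fin n => ((rnkF (σF x) : ℕ))) h3).trans (congrArg Fin.val h5)
  · intro m m' hmm hm'
    by_contra hcon
    push_neg at hcon
    have hxn : min m (n-1) < n := by omega
    have hyn : min m' (n-1) < n := by omega
    set x : Fin n := ⟨min m (n-1), hxn⟩ with hx
    set y : Fin n := ⟨min m' (n-1), hyn⟩ with hy
    have hlt : key (σF y) < key (σF x) := hkeylt _ _ hcon
    have h4 : x ≤ y := Fin.mk_le_mk.mpr (by omega)
    have h5 : ((oiso x : ℕ)) ≤ ((oiso y : ℕ)) := oiso.monotone h4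
    have e1 := (hkeyσ x).1
    have e2 := (hkeyσ y).1
    rw [← e1, ← e2] at h5
    exact absurd hlt (not_lt.mpr h5)

lemma window_lemma {V : Type} [Fintype V] (G : SimpleGraph V) (t ℓ : ℕ)
    (A B : Set V) (D : ℕ → Set V) (rnk : V → ℕ) (Z P : Set V) (nn a b : ℕ)
    (hUniv : A ∪ B = Set.univ)
    (hEdge : ∀ ⦃u v⦄, G.Adj u v → (u ∈ A ∧ v ∈ A) ∨ (u ∈ B ∧ v ∈ B))
    (hDA : ∀ m, D m ⊆ A)
    (hself : ∀ v ∈ A, v ∈ D (rnk v))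
    (hrank : ∀ m, ∀ v ∈ D m, rnk v ≤ m)
    (hcont : ∀ v, ∀ {i j l : ℕ}, i ≤ j → j ≤ l → v ∈ D i → v ∈ D l → v ∈ D j)
    (hedge : ∀ ⦃u v⦄, G.Adj u v → u ∈ A → v ∈ A → ∃ m, u ∈ D m ∧ v ∈ D m)
    (hcard : ∀ m, (D m).ncard ≤ t + 1)
    (hABZP : A ∩ B ⊆ Z ∪ P)
    (hab : a ≤ b) (hbnn : b ≤ nn)
    (hZa : ∀ v ∈ Z, rnk v ≤ a)
    (hPnn : ∀ v ∈ P, v ∈ D nn)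
    (hsize : (D a).ncard + (b - a) = ℓ)
    (hIoc : {v | v ∈ A ∧ a < rnk v ∧ rnk v ≤ b}.ncard = b - a) :
    ∃ A' B' : Set V, IsTSep G t A' B' ∧ A' ⊆ A ∧ B ⊆ B' ∧ A'.ncard = ℓ ∧
      ∀ v ∈ A' \ B', a < rnk v ∧ rnk v ≤ b := by
  classical
  set A' : Set V := D a ∪ {v | v ∈ A ∧ a < rnk v ∧ rnk v ≤ b} with hA'def
  set B' : Set V := A'ᶜ ∪ D a ∪ D b with hB'def
  have hA'A : A' ⊆ A := by
    rintro x (hx | hx)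
    · exact hDA a hx
    · exact hx.1
  have hDab : ∀ m, a ≤ m → m ≤ b → D m ⊆ A' := by
    intro m h1 h2 x hx
    rcases le_or_gt (rnk x) a with hr | hr
    · exact Or.inl (hcont x hr h1 (hself x (hDA m hx)) hx)
    · exact Or.inr ⟨hDA m hx, hr, (hrank m x hx).trans h2⟩
  have hmemA' : ∀ v ∈ A', ∃ m, a ≤ m ∧ m ≤ b ∧ v ∈ D m := by
    rintro v (hv | hv)
    · exact ⟨a, le_refl a, hab, hv⟩
    · exact ⟨rnk v, hv.2.1.le, hv.2.2, hself v hv.1⟩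
  have hpulla : ∀ v ∈ A', ∀ m, v ∈ D m → m ≤ a → v ∈ D a := by
    intro v hv m hm hma
    obtain ⟨m', h1, h2, h3⟩ := hmemA' v hv
    exact hcont v hma h1 hm h3
  have hpullb : ∀ v ∈ A', ∀ m, v ∈ D m → b ≤ m → v ∈ D b := by
    intro v hv m hm hbm
    obtain ⟨m', h1, h2, h3⟩ := hmemA' v hv
    exact hcont v h2 hbm h3 hm
  have hBside : ∀ v ∈ A', v ∈ B → v ∈ D a ∪ D b := by
    intro v hv hvB
    rcases hABZP ⟨hA'A hv, hvB⟩ with hz | hpp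
    · exact Or.inl (hpulla v hv (rnk v) (hself v (hA'A hv)) (hZa v hz))
    · obtain ⟨m', h1, h2, h3⟩ := hmemA' v hv
      exact Or.inr (hcont v h2 hbnn h3 (hPnn v hpp))
  have hcross : ∀ u v, G.Adj u v → u ∉ A' → v ∈ A' → v ∈ D a ∪ D b := by
    intro u v hadj hu hv
    by_cases huA : u ∈ A
    · obtain ⟨m, hum, hvm⟩ := hedge hadj huA (hA'A hv)
      rcases lt_or_ge m a with h | h
      · exact Or.inl (hpulla v hv m hvm h.le)
      rcases le_or_gt m b with h2 | h2
      · exact absurd (hDab m h h2 hum) hu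
      · exact Or.inr (hpullb v hv m hvm h2.le)
    · have hvB : v ∈ B := by
        rcases hEdge hadj with ⟨h1, _⟩ | ⟨_, h2⟩
        · exact absurd h1 huA
        · exact h2
      exact hBside v hv hvB
  have hDaA' : D a ⊆ A' := hDab a le_rfl hab
  have hDbA' : D b ⊆ A' := hDab b hab le_rfl
  have hDaB' : D a ⊆ B' := fun x hx => Or.inl (Or.inr hx)
  have hDbB' : D b ⊆ B' := fun x hx => Or.inr hx
  refine ⟨A', B', ⟨?_, ?_, b - a + 1, Nat.succ_pos _, fun i => D (a + i), ⟨?_, ?_, ?_, ?_⟩, ?_, ?_⟩,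
    hA'A, ?_, ?_, ?_⟩
  · apply Set.eq_univ_of_forall
    intro x
    by_cases hx : x ∈ A'
    · exact Or.inl hx
    · exact Or.inr (Or.inl (Or.inl hx))
  · intro u v hadj
    by_cases hu : u ∈ A' <;> by_cases hv : v ∈ A'
    · exact Or.inl ⟨hu, hv⟩
    · refine Or.inr ⟨?_, Or.inl (Or.inl hv)⟩
      rcases hcross v u hadj.symm hv hu with h | h
      · exact hDaB' h
      · exact hDbB' h
    · refine Or.inr ⟨Or.inl (Or.inl hu), ?_⟩
      rcases hcross u v hadj hu hv with h | h
      · exact hDaB' h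
      · exact hDbB' h
    · exact Or.inr ⟨Or.inl (Or.inl hu), Or.inl (Or.inl hv)⟩
  · intro i x hx
    exact hDab (a + i) (Nat.le_add_right a i) (by have := i.isLt; omega) hx
  · rintro v (hv | hv)
    · exact ⟨⟨0, by omega⟩, by simpa using hv⟩
    · refine ⟨⟨rnk v - a, by have := hv.2.2; omega⟩, ?_⟩
      have e : a + (rnk v - a) = rnk v := by have := hv.2.1; omega
      simpa [e] using hself v hv.1
  · intro u v hadj hu hv
    obtain ⟨m, hum, hvm⟩ := hedge hadj (hA'A hu) (hA'A hv)
    rcases lt_or_ge m a with h | h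
    · exact ⟨⟨0, by omega⟩, by simpa using hpulla u hu m hum h.le,
        by simpa using hpulla v hv m hvm h.le⟩
    rcases le_or_gt m b with h2 | h2
    · refine ⟨⟨m - a, by omega⟩, ?_, ?_⟩
      · have e : a + (m - a) = m := by omega
        simpa [e] using hum
      · have e : a + (m - a) = m := by omega
        simpa [e] using hvm
    · refine ⟨⟨b - a, by omega⟩, ?_, ?_⟩
      · have e : a + (b - a) = b := by omega
        simpa [e] using hpullb u hu m hum h2.le
      · have e : a + (b - a) = b := by omega
        simpa [e] using hpullb v hv m hvm h2.le
  · intro v i j l hij hjl hvi hvl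
    exact hcont v (by exact Nat.add_le_add_left (Fin.le_def.mp hij) a)
      (by exact Nat.add_le_add_left (Fin.le_def.mp hjl) a) hvi hvl
  · intro i
    exact hcard (a + i)
  · have e1 : a + ((⟨0, by omega⟩ : Fin (b - a + 1)) : ℕ) = a := by simp
    have e2 : a + ((⟨b - a + 1 - 1, by omega⟩ : Fin (b - a + 1)) : ℕ) = b := by simp; omega
    simp only [e1, e2]
    ext x
    constructor
    · rintro ⟨hx, (h | h) | h⟩
      · exact absurd hx h
      · exact Or.inl h
      · exact Or.inr h
    · rintro (h | h)
      · exact ⟨hDaA' h, hDaB' h⟩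
      · exact ⟨hDbA' h, hDbB' h⟩
  · intro x hx
    by_cases hxA : x ∈ A'
    · rcases hBside x hxA hx with h | h
      · exact hDaB' h
      · exact hDbB' h
    · exact Or.inl (Or.inl hxA)
  · have hdisj : Disjoint (D a) {v | v ∈ A ∧ a < rnk v ∧ rnk v ≤ b} := by
      rw [Set.disjoint_left]
      intro x hx hx2
      exact absurd (hrank a x hx) (by exact Nat.not_le.mpr hx2.2.1)
    rw [hA'def, Set.ncard_union_eq hdisj (Set.toFinite _) (Set.toFinite _), hIoc]
    exact hsize
  · intro v hv
    have hv1 : v ∈ A' := hv.1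
    have hv2 : v ∉ D a ∪ D b := by
      intro hc
      rcases hc with h | h
      · exact hv.2 (hDaB' h)
      · exact hv.2 (hDbB' h)
    rcases hv1 with h | h
    · exact absurd (Or.inl h) hv2
    · exact ⟨h.2.1, h.2.2⟩

/-- Refinement of a `t`-sep: given a `t`-sep `(A, B)` of `G` with `k` marked vertices and
`1 ≤ ℓ ≤ ⌈|A|/(k+1)⌉`, there is a `t`-sep `(A', B')` with `A' ⊆ A`, `B ⊆ B'`, `|A'| = ℓ`,
and no marked vertex in `A' \ B'`. -/
theorem tsep_refinement {V : Type} [Fintype V] (G : SimpleGraph V) (t k ℓ : ℕ)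
    (A B : Set V) (h : IsTSep G t A B) (S : Set V) (hS : S.ncard = k)
    (hl1 : 1 ≤ ℓ) (hl2 : ℓ ≤ (A.ncard + k) / (k + 1)) :
    ∃ A' B' : Set V, IsTSep G t A' B' ∧ A' ⊆ A ∧ B ⊆ B' ∧ A'.ncard = ℓ ∧
      ∀ v ∈ A' \ B', v ∉ S := by
  classical
  obtain ⟨hUniv, hEdge, p, hp, Bags, ⟨hSub, hCov, hEdges, hMono⟩, hW, hAB⟩ := h
  have hln : ℓ * (k + 1) ≤ A.ncard + k := (Nat.le_div_iff_mul_le (by omega)).mp hl2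
  have he1 : ℓ * (k + 1) = ℓ * k + ℓ := by ring
  have hkl : k ≤ ℓ * k := Nat.le_mul_of_pos_left k hl1
  have hlen : ℓ ≤ A.ncard := by omega
  by_cases hcase : ℓ ≤ t + 1
  · -- trivial case: single bag
    obtain ⟨A', hA'sub, hA'card⟩ := Set.exists_subset_card_eq hlen
    refine ⟨A', Set.univ, ⟨by simp, fun u v _ => Or.inr ⟨trivial, trivial⟩,
      1, Nat.one_pos, fun _ => A',
      ⟨fun _ => subset_rfl, fun v hv => ⟨⟨0, Nat.one_pos⟩, hv⟩,
        fun u v _ hu hv => ⟨⟨0, Nat.one_pos⟩, hu, hv⟩,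
        fun v i j l _ _ hi _ => hi⟩,
      fun _ => by rw [hA'card]; exact hcase, by simp⟩,
      hA'sub, Set.subset_univ B, hA'card, by simp⟩
  -- main case
  have ht2 : t + 2 ≤ ℓ := by omega
  have hn1 : (k + 1) * (ℓ - 1) + 1 ≤ A.ncard := by
    obtain ⟨l', rfl⟩ : ∃ l', ℓ = l' + 1 := ⟨ℓ - 1, by omega⟩
    have e2 : (l' + 1) * (k + 1) = (k + 1) * l' + k + 1 := by ring
    simp only [Nat.add_sub_cancel]
    omega
  set n := A.ncard with hn
  have hn0 : 1 ≤ n := by omega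
  -- bags indexed by ℕ
  set BagN : ℕ → Set V := fun i => ⋃ (h : i < p), Bags ⟨i, h⟩ with hBagN
  have hBmem : ∀ i v, v ∈ BagN i ↔ ∃ h : i < p, v ∈ Bags ⟨i, h⟩ := by
    intro i v
    simp [hBagN, Set.mem_iUnion]
  have hBsub : ∀ i, BagN i ⊆ A := by
    intro i v hv
    obtain ⟨hi, hv⟩ := (hBmem i v).mp hv
    exact hSub _ hv
  have hBcard : ∀ i, (BagN i).ncard ≤ t + 1 := by
    intro i
    by_cases hi : i < p
    · have : BagN i = Bags ⟨i, hi⟩ := by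
        ext v
        rw [hBmem]
        exact ⟨fun ⟨_, hv⟩ => hv, fun hv => ⟨hi, hv⟩⟩
      rw [this]; exact hW _
    · have : BagN i = ∅ := by
        ext v
        rw [hBmem]
        simp [hi]
      rw [this]; simp
  set introN : V → ℕ := fun v => sInf {i | v ∈ BagN i} with hintroN
  have hintro_memA : ∀ v ∈ A, v ∈ BagN (introN v) := by
    intro v hv
    obtain ⟨i, hi⟩ := hCov v hv
    have hne : {j | v ∈ BagN j}.Nonempty := by
      refine ⟨(i : ℕ), ?_⟩
      rw [Set.mem_setOf_eq, hBmem]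
      exact ⟨i.isLt, by simpa using hi⟩
    exact Nat.sInf_mem hne
  have hintroP : ∀ v ∈ A, introN v < p := by
    intro v hv
    obtain ⟨hi, _⟩ := (hBmem _ v).mp (hintro_memA v hv)
    exact hi
  have hintro_le : ∀ v i, v ∈ BagN i → introN v ≤ i := by
    intro v i hv
    exact Nat.sInf_le hv
  have hinterp : ∀ v i j l, i ≤ j → j ≤ l → v ∈ BagN i → v ∈ BagN l → v ∈ BagN j := by
    intro v i j l hij hjl hvi hvl
    obtain ⟨hi, hvi'⟩ := (hBmem i v).mp hvi
    obtain ⟨hl, hvl'⟩ := (hBmem l v).mp hvl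
    have hj : j < p := by omega
    rw [hBmem]
    exact ⟨hj, hMono v ⟨i, hi⟩ ⟨j, hj⟩ ⟨l, hl⟩ (Fin.mk_le_mk.mpr hij) (Fin.mk_le_mk.mpr hjl) hvi' hvl'⟩
  -- sorted enumeration
  obtain ⟨σ0, rnk, hσA, hσinj, hrnkA, hrnkσ, hσmono⟩ := exists_sorted_enum A introN n hn.symm hn0
  set σ : ℕ → V := fun m => σ0 (min m (n - 1)) with hσ
  have hminlt : ∀ m : ℕ, min m (n - 1) < n :=
    fun m => lt_of_le_of_lt (min_le_right _ _) (Nat.sub_lt (by omega) (by omega))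
  have hσA' : ∀ m, σ m ∈ A := fun m => hσA _ (hminlt m)
  have hσeq : ∀ m, m < n → σ m = σ0 m := by
    intro m hm
    show σ0 (min m (n - 1)) = σ0 m
    rw [min_eq_left (show m ≤ n - 1 by omega)]
  have hrnklt : ∀ v ∈ A, rnk v < n := fun v hv => (hrnkA v hv).1
  have hσrnk : ∀ v ∈ A, σ (rnk v) = v := by
    intro v hv
    rw [hσeq _ (hrnklt v hv)]
    exact (hrnkA v hv).2
  have hrnkσ' : ∀ m, m < n → rnk (σ m) = m := by
    intro m hm
    rw [hσeq m hm]
    exact hrnkσ m hm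
  have hσintro_mono : ∀ m m', m ≤ m' → introN (σ m) ≤ introN (σ m') := by
    intro m m' hmm
    exact hσmono _ _ (by omega) (hminlt m')
  -- refined one-at-a-time decomposition
  set DD : ℕ → Set V := fun m => {v | v ∈ A ∧ rnk v ≤ m ∧ v ∈ BagN (introN (σ m))} with hDD
  have hDA : ∀ m, DD m ⊆ A := fun m v hv => hv.1
  have hself : ∀ v ∈ A, v ∈ DD (rnk v) := by
    intro v hv
    refine ⟨hv, le_rfl, ?_⟩
    rw [hσrnk v hv]
    exact hintro_memA v hv
  have hrank : ∀ m, ∀ v ∈ DD m, rnk v ≤ m := fun m v hv => hv.2.1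
  have hcont : ∀ v : V, ∀ {i j l : ℕ}, i ≤ j → j ≤ l → v ∈ DD i → v ∈ DD l → v ∈ DD j := by
    intro v i j l hij hjl hvi hvl
    refine ⟨hvi.1, hvi.2.1.trans hij, ?_⟩
    exact hinterp v _ _ _ (hσintro_mono i j hij) (hσintro_mono j l hjl) hvi.2.2 hvl.2.2
  have hedge : ∀ ⦃u v : V⦄, G.Adj u v → u ∈ A → v ∈ A → ∃ m, u ∈ DD m ∧ v ∈ DD m := by
    have core : ∀ u v : V, u ∈ A → v ∈ A → (∃ i, u ∈ BagN i ∧ v ∈ BagN i) →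
        rnk u ≤ rnk v → u ∈ DD (rnk v) ∧ v ∈ DD (rnk v) := by
      intro u v hu hv ⟨i, hui, hvi⟩ hle
      have hσv : σ (rnk v) = v := hσrnk v hv
      have hiu : introN u ≤ introN v := by
        have := hσintro_mono (rnk u) (rnk v) hle
        rwa [hσrnk u hu, hσv] at this
      have hvi' : introN v ≤ i := hintro_le v i hvi
      have huB : u ∈ BagN (introN v) :=
        hinterp u (introN u) (introN v) i hiu hvi' (hintro_memA u hu) hui
      constructor
      · exact ⟨hu, hle, by rw [hσv]; exact huB⟩
      · exact ⟨hv, le_rfl, by rw [hσv]; exact hintro_memA v hv⟩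
    intro u v hadj hu hv
    obtain ⟨i, hui, hvi⟩ := hEdges hadj hu hv
    have hBag : ∃ j, u ∈ BagN j ∧ v ∈ BagN j := by
      refine ⟨(i : ℕ), ?_, ?_⟩ <;> rw [hBmem] <;> exact ⟨i.isLt, by simpa using ‹_›⟩
    rcases le_total (rnk u) (rnk v) with hle | hle
    · obtain ⟨h1, h2⟩ := core u v hu hv hBag hle
      exact ⟨rnk v, h1, h2⟩
    · obtain ⟨h1, h2⟩ := core v u hv hu (by obtain ⟨j, hj1, hj2⟩ := hBag; exact ⟨j, hj2, hj1⟩) hle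
      exact ⟨rnk u, h2, h1⟩
  have hcard : ∀ m, (DD m).ncard ≤ t + 1 := by
    intro m
    have hsub : DD m ⊆ BagN (introN (σ m)) := fun v hv => hv.2.2
    exact (Set.ncard_le_ncard hsub (Set.toFinite _)).trans (hBcard _)
  have hABZP : A ∩ B ⊆ BagN 0 ∪ BagN (p - 1) := by
    rw [hAB]
    rintro x (hx | hx)
    · exact Or.inl ((hBmem 0 x).mpr ⟨hp, hx⟩)
    · exact Or.inr ((hBmem (p - 1) x).mpr ⟨Nat.sub_lt hp Nat.one_pos, hx⟩)
  have hPnn : ∀ v ∈ BagN (p - 1), v ∈ DD (n - 1) := by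
    intro v hv
    have hvA : v ∈ A := hBsub _ hv
    have h1 : rnk v ≤ n - 1 := by have := hrnklt v hvA; omega
    refine ⟨hvA, h1, ?_⟩
    have hw : σ (n - 1) ∈ A := hσA' _
    have h2 : introN v ≤ introN (σ (n - 1)) := by
      have := hσintro_mono (rnk v) (n - 1) h1
      rwa [hσrnk v hvA] at this
    have h3 : introN (σ (n - 1)) ≤ p - 1 := by
      have := hintroP _ hw
      omega
    exact hinterp v (introN v) _ (p - 1) h2 h3 (hintro_memA v hvA) hv
  -- counting
  have hIoc : ∀ a b : ℕ, b < n → {v | v ∈ A ∧ a < rnk v ∧ rnk v ≤ b}.ncard = b - a := by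
    intro a b hb
    have himg : {v | v ∈ A ∧ a < rnk v ∧ rnk v ≤ b} = σ '' (Set.Ioc a b) := by
      ext v
      constructor
      · rintro ⟨hv, h1, h2⟩
        exact ⟨rnk v, ⟨h1, h2⟩, hσrnk v hv⟩
      · rintro ⟨j, ⟨hj1, hj2⟩, rfl⟩
        have hjn : j < n := by omega
        exact ⟨hσA' j, by rw [hrnkσ' j hjn]; exact hj1, by rw [hrnkσ' j hjn]; exact hj2⟩
    rw [himg, Set.ncard_image_of_injOn, ← Finset.coe_Ioc, Set.ncard_coe_finset, Nat.card_Ioc]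
    intro x hx y hy hxy
    have hx' : x < n := by simp only [Set.mem_Ioc] at hx; omega
    have hy' : y < n := by simp only [Set.mem_Ioc] at hy; omega
    rw [hσeq x hx', hσeq y hy'] at hxy
    exact hσinj x y hx' hy' hxy
  have hIic : ∀ m : ℕ, m < n → {v | v ∈ A ∧ rnk v ≤ m}.ncard = m + 1 := by
    intro m hm
    have himg : {v | v ∈ A ∧ rnk v ≤ m} = σ '' (Set.Iic m) := by
      ext v
      constructor
      · rintro ⟨hv, h1⟩
        exact ⟨rnk v, h1, hσrnk v hv⟩
      · rintro ⟨j, hj, rfl⟩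
        have hjn : j < n := by simp only [Set.mem_Iic] at hj; omega
        exact ⟨hσA' j, by rw [hrnkσ' j hjn]; simpa using hj⟩
    rw [himg, Set.ncard_image_of_injOn, ← Finset.coe_Iic, Set.ncard_coe_finset, Nat.card_Iic]
    intro x hx y hy hxy
    have hx' : x < n := by simp only [Set.mem_Iic] at hx; omega
    have hy' : y < n := by simp only [Set.mem_Iic] at hy; omega
    rw [hσeq x hx', hσeq y hy'] at hxy
    exact hσinj x y hx' hy' hxy
  -- the starting point a₁
  set a₁ : ℕ := sSup (rnk '' BagN 0) with ha₁
  have hZa₁ : ∀ v ∈ BagN 0, rnk v ≤ a₁ := by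
    intro v hv
    exact le_csSup (((BagN 0).toFinite.image rnk).bddAbove) (Set.mem_image_of_mem rnk hv)
  have ha₁n : a₁ < n := by
    rcases Set.eq_empty_or_nonempty (BagN 0) with hB0 | hB0
    · rw [ha₁, hB0]
      simp only [Set.image_empty]
      rw [csSup_empty]
      exact hn0
    · have hne : (rnk '' BagN 0).Nonempty := hB0.image rnk
      have := Nat.sSup_mem hne (((BagN 0).toFinite.image rnk).bddAbove)
      obtain ⟨w, hw, hweq⟩ := this
      have hwa : a₁ = rnk w := hweq.symm
      rw [hwa]
      exact hrnklt w (hBsub 0 hw)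
  have hDDa₁ : DD a₁ = {v | v ∈ A ∧ rnk v ≤ a₁} := by
    apply Set.eq_of_subset_of_subset
    · exact fun v hv => ⟨hv.1, hv.2.1⟩
    rcases Set.eq_empty_or_nonempty (BagN 0) with hB0 | hB0
    · have ha₁0 : a₁ = 0 := by rw [ha₁, hB0]; simp only [Set.image_empty]; exact csSup_empty
      rintro v ⟨hv, hr⟩
      have hr0 : rnk v = 0 := by omega
      have : σ a₁ = v := by rw [ha₁0, ← hr0]; exact hσrnk v hv
      refine ⟨hv, hr, ?_⟩
      rw [this]
      exact hintro_memA v hv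
    · have hne : (rnk '' BagN 0).Nonempty := hB0.image rnk
      obtain ⟨w, hw, hweq⟩ := Nat.sSup_mem hne (((BagN 0).toFinite.image rnk).bddAbove)
      have hwA : w ∈ A := hBsub 0 hw
      have hwa : a₁ = rnk w := hweq.symm
      have hσa₁ : σ a₁ = w := by rw [hwa]; exact hσrnk w hwA
      have hw0 : introN w = 0 := Nat.le_zero.mp (hintro_le w 0 hw)
      rintro v ⟨hv, hr⟩
      refine ⟨hv, hr, ?_⟩
      have h2 : introN v ≤ introN w := by
        have h5 := hσintro_mono (rnk v) a₁ hr
        rwa [hσrnk v hv, hσa₁] at h5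
      have h3 : introN v = 0 := by omega
      rw [hσa₁, hw0]
      have := hintro_memA v hv
      rwa [h3] at this
  have hcard_a₁ : (DD a₁).ncard = a₁ + 1 := by
    rw [hDDa₁]
    exact hIic a₁ ha₁n
  -- the cut sequence
  set g : ℕ → ℕ := fun i => Nat.rec a₁ (fun _ prev => prev + (ℓ - (DD prev).ncard)) i with hg
  have hg0 : g 0 = a₁ := rfl
  have hgs : ∀ i, g (i + 1) = g i + (ℓ - (DD (g i)).ncard) := fun i => rfl
  have hDDpos : ∀ m, 1 ≤ (DD m).ncard := by
    intro m
    have hmem : σ m ∈ DD m := by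
      refine ⟨hσA' m, ?_, hintro_memA _ (hσA' m)⟩
      show rnk (σ0 (min m (n - 1))) ≤ m
      rw [hrnkσ _ (hminlt m)]
      exact min_le_left _ _
    exact (Set.ncard_pos (Set.toFinite _)).mpr ⟨σ m, hmem⟩
  have hstep : ∀ i, g i + 1 ≤ g (i + 1) ∧ g (i + 1) ≤ g i + (ℓ - 1) := by
    intro i
    have h1 := hcard (g i)
    have h2 := hDDpos (g i)
    have e : g (i + 1) = g i + (ℓ - (DD (g i)).ncard) := rfl
    omega
  have hgmono : ∀ i j, i ≤ j → g i ≤ g j := by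
    intro i j hij
    induction j with
    | zero =>
      have hi0 : i = 0 := by omega
      subst hi0
      exact le_rfl
    | succ j ih =>
      rcases Nat.lt_or_ge i (j + 1) with hlt | hge
      · have h1 := (hstep j).1
        have h2 := ih (by omega)
        omega
      · have hi1 : i = j + 1 := by omega
        subst hi1
        exact le_rfl
  have hg1 : g 1 = ℓ - 1 := by
    have e : g 1 = a₁ + (ℓ - (DD a₁).ncard) := rfl
    have h2 : a₁ + 1 ≤ t + 1 := by rw [← hcard_a₁]; exact hcard a₁
    rw [e, hcard_a₁]
    omega
  have hgb : ∀ i, g (i + 1) ≤ (i + 1) * (ℓ - 1) := by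
    intro i
    induction i with
    | zero =>
      have e : g (0 + 1) = ℓ - 1 := hg1
      omega
    | succ i ih =>
      have h1 := (hstep (i + 1)).2
      have e : (i + 1 + 1) * (ℓ - 1) = (i + 1) * (ℓ - 1) + (ℓ - 1) := by ring
      omega
  have hgn : ∀ i, i ≤ k + 1 → g i < n := by
    intro i hi
    rcases Nat.eq_zero_or_pos i with rfl | hipos
    · rw [hg0]; exact ha₁n
    · obtain ⟨i', rfl⟩ : ∃ i', i = i' + 1 := ⟨i - 1, by omega⟩
      have h1 := hgb i'
      have h2 : (i' + 1) * (ℓ - 1) ≤ (k + 1) * (ℓ - 1) := Nat.mul_le_mul_right _ (by omega)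
      omega
  -- apply the window lemma to each of the k+1 windows
  have hwin : ∀ i : Fin (k + 1), ∃ A' B' : Set V, IsTSep G t A' B' ∧ A' ⊆ A ∧ B ⊆ B' ∧
      A'.ncard = ℓ ∧ ∀ v ∈ A' \ B', g (i : ℕ) < rnk v ∧ rnk v ≤ g ((i : ℕ) + 1) := by
    intro i
    have hin : (i : ℕ) + 1 ≤ k + 1 := i.isLt
    have hab : g (i : ℕ) ≤ g ((i : ℕ) + 1) := hgmono _ _ (Nat.le_succ _)
    have hbn : g ((i : ℕ) + 1) < n := hgn _ hin
    refine window_lemma G t ℓ A B DD rnk (BagN 0) (BagN (p - 1)) (n - 1) (g (i : ℕ))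
      (g ((i : ℕ) + 1))
      hUniv hEdge hDA hself hrank hcont hedge hcard hABZP hab
      (show g ((i : ℕ) + 1) ≤ n - 1 by omega) ?_ hPnn ?_ ?_
    · intro v hv
      have h0i : a₁ ≤ g (i : ℕ) := by
        rw [← hg0]
        exact hgmono 0 (i : ℕ) (Nat.zero_le _)
      exact (hZa₁ v hv).trans h0i
    · have h1 := hcard (g i)
      have := hgs (i : ℕ)
      omega
    · exact hIoc _ _ hbn
  choose A' B' h1 h2 h3 h4 h5 using hwin
  have hgood : ∃ i : Fin (k + 1), ∀ v ∈ A' i \ B' i, v ∉ S := by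
    by_contra hc
    push_neg at hc
    choose s hs1 hs2 using hc
    have hkey : ∀ i j : Fin (k + 1), i < j → s i ≠ s j := by
      intro i j hij hne
      have hi := h5 i (s i) (hs1 i)
      have hj := h5 j (s j) (hs1 j)
      have hijn : (i : ℕ) + 1 ≤ (j : ℕ) := by
        have hlt := Fin.lt_def.mp hij
        omega
      have : g ((i : ℕ) + 1) ≤ g (j : ℕ) := hgmono _ _ hijn
      rw [hne] at hi
      omega
    have hinj : Function.Injective s := by
      intro i j hij
      by_contra hne
      rcases lt_or_gt_of_ne hne with h | h
      · exact hkey i j h hij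
      · exact hkey j i h hij.symm
    have hrange : Set.range s ⊆ S := by
      rintro x ⟨i, rfl⟩
      exact hs2 i
    have hcard1 : (Set.range s).ncard = k + 1 := by
      rw [← Set.image_univ, Set.ncard_image_of_injOn (hinj.injOn), Set.ncard_univ]
      simp
    have := Set.ncard_le_ncard hrange (Set.toFinite S)
    omega
  obtain ⟨i, hi⟩ := hgood
  exact ⟨A' i, B' i, h1 i, h2 i, h3 i, h4 i, hi⟩
end

section
/- Let (T, v) be a rooted tree of height h and maximum degree Δ. If (T, v) does not contain the complete binary tree of height k+1 as a rooted minor, then |V(T)| ≤ (h+1)^(k+1) · (Δ+1)^(k+1). -/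
open SimpleGraph Set

/-- Vertices of the complete binary tree of height `h`: binary strings of length at most `h`. -/
def cbtVert (h : ℕ) : Type := {l : List Bool // l.length ≤ h}

/-- The complete binary tree of height `h`, with a vertex adjacent to its two children
obtained by prepending a bit. -/
def completeBinaryTree (h : ℕ) : SimpleGraph (cbtVert h) :=
  SimpleGraph.fromRel fun a b => ∃ x : Bool, b.1 = x :: a.1

/-- The root (empty string) of the complete binary tree of height `h`. -/
def cbtRoot (h : ℕ) : cbtVert h := ⟨[], Nat.zero_le h⟩

/-- `(H, rH)` is a rooted minor of `(G, rG)`: a minor model of `H` in `G` whose branch set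
for the root `rH` contains the root `rG`. -/
def HasRootedMinor {V W : Type*} (G : SimpleGraph V) (rG : V) (H : SimpleGraph W) (rH : W) :
    Prop :=
  ∃ f : W → Set V, rG ∈ f rH ∧
    (∀ w, ((G.induce (f w)).Connected)) ∧
    (Pairwise fun w w' => Disjoint (f w) (f w')) ∧
    ∀ ⦃w w'⦄, H.Adj w w' → ∃ a ∈ f w, ∃ b ∈ f w', G.Adj a b

/-!
Induct on `k`: if the subtree of `r` has more than `((h + 1) * (Δ + 1)) ^ k` vertices, then it
contains a model of the complete binary tree of height `k` rooted at `r`. Call a vertex heavy if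
its own subtree has more than `M = ((h + 1) * (Δ + 1)) ^ (k - 1)` vertices. If two heavy
vertices are incomparable, their models together with the rest of the subtree of `r` as root
branch set model the tree of height `k`. Otherwise the heavy vertices form a chain, whose members have
distinct depths, so there are at most `h + 1` of them, and every other vertex lies below a light child of a heavy vertex; the
subtree of `r` then has at most `(h + 1) * (1 + Δ * M) ≤ ((h + 1) * (Δ + 1)) ^ k` vertices.
-/

lemma Set.ncard_biUnion_le_ncard_mul {ι α : Type*} {t : Set ι} (ht : t.Finite)
    {s : ι → Set α} {m : ℕ} (hs : ∀ i ∈ t, (s i).ncard ≤ m) :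
    (⋃ i ∈ t, s i).ncard ≤ t.ncard * m := by
  have h := ht.toFinset.set_ncard_biUnion_le s
  simp only [Finite.mem_toFinset] at h
  calc (⋃ i ∈ t, s i).ncard ≤ ∑ i ∈ ht.toFinset, (s i).ncard := h
    _ ≤ ht.toFinset.card * m := by
        simpa using Finset.sum_le_card_nsmul _ _ m fun i hi => hs i (by simpa using hi)
    _ = t.ncard * m := by rw [ncard_eq_toFinset_card t ht]

lemma SimpleGraph.connected_induce_of_forall_walk {V : Type*} {G : SimpleGraph V}
    {S : Set V} {r : V} (hr : r ∈ S) (h : ∀ x ∈ S, ∃ p : G.Walk r x, ∀ y ∈ p.support, y ∈ S) :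
    (G.induce S).Connected := by
  rw [connected_iff_exists_forall_reachable]
  refine ⟨⟨r, hr⟩, fun ⟨x, hx⟩ => ?_⟩
  obtain ⟨p, hp⟩ := h x hx
  exact (p.induce S hp).reachable

namespace SimpleGraph.IsTree

variable {V : Type*} {T : SimpleGraph V} (hT : T.IsTree) {v r u x y : V}

noncomputable def path (x y : V) : T.Walk x y := (hT.existsUnique_path x y).exists.choose

lemma isPath_path (x y : V) : (hT.path x y).IsPath :=
  (hT.existsUnique_path x y).exists.choose_spec

lemma eq_path {p : T.Walk x y} (hp : p.IsPath) : p = hT.path x y :=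
  (hT.existsUnique_path x y).unique hp (hT.isPath_path x y)

lemma length_path (x y : V) : (hT.path x y).length = T.dist x y := by
  obtain ⟨p, hp, hlen⟩ := hT.connected.exists_path_of_dist x y
  rw [← hT.eq_path hp, hlen]

/-- The subtree of `u` when `T` is rooted at `v`: the vertices whose path from `v` passes
through `u`. -/
def subtree (v u : V) : Set V := {x | u ∈ (hT.path v x).support}

lemma mem_subtree : x ∈ hT.subtree v u ↔ u ∈ (hT.path v x).support := Iff.rfl

lemma self_mem_subtree : u ∈ hT.subtree v u := Walk.end_mem_support _

lemma subtree_root : hT.subtree v v = univ :=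
  eq_univ_of_forall fun _ => Walk.start_mem_support _

lemma path_eq_append (hx : x ∈ hT.subtree v u) :
    hT.path v x = (hT.path v u).append (hT.path u x) := by
  classical
  have hpath := hT.isPath_path v x
  rw [← (hT.path v x).take_spec hx, hT.eq_path (hpath.takeUntil hx),
    hT.eq_path (hpath.dropUntil hx)]

lemma dist_eq_add_of_mem_subtree (hx : x ∈ hT.subtree v u) :
    T.dist v x = T.dist v u + T.dist u x := by
  simpa only [Walk.length_append, length_path] using
    congrArg Walk.length (hT.path_eq_append hx)

lemma eq_of_mem_subtree_of_mem_subtree (hx : x ∈ hT.subtree v u)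
    (hu : u ∈ hT.subtree v x) : u = x := by
  have := hT.dist_eq_add_of_mem_subtree hx
  have := hT.dist_eq_add_of_mem_subtree hu
  exact hT.connected.dist_eq_zero_iff.mp (by omega)

lemma subtree_subset_of_mem (hy : y ∈ hT.subtree v u) : hT.subtree v y ⊆ hT.subtree v u := by
  intro x hx
  rw [mem_subtree, hT.path_eq_append hx, Walk.mem_support_append_iff]
  exact Or.inl hy

lemma mem_subtree_of_mem_support (hx : x ∈ hT.subtree v u) (hy : y ∈ (hT.path u x).support) :
    y ∈ hT.subtree v u ∧ x ∈ hT.subtree v y := by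
  classical
  have hprefix : ((hT.path v u).append ((hT.path u x).takeUntil y hy)).IsPath := by
    apply Walk.IsPath.of_append_left (q := (hT.path u x).dropUntil y hy)
    rw [← Walk.append_assoc, Walk.take_spec, ← hT.path_eq_append hx]
    exact hT.isPath_path v x
  refine ⟨?_, ?_⟩
  · rw [mem_subtree, ← hT.eq_path hprefix, Walk.mem_support_append_iff]
    exact Or.inl (Walk.end_mem_support _)
  · rw [mem_subtree, hT.path_eq_append hx, Walk.mem_support_append_iff]
    exact Or.inr hy

lemma mem_subtree_or_mem_subtree (hx : x ∈ hT.subtree v u) (hy : x ∈ hT.subtree v y) :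
    u ∈ hT.subtree v y ∨ y ∈ hT.subtree v u := by
  rw [mem_subtree, hT.path_eq_append hx, Walk.mem_support_append_iff] at hy
  exact hy.imp id fun h => (hT.mem_subtree_of_mem_support hx h).1

lemma disjoint_subtree (hu : u ∉ hT.subtree v y) (hy : y ∉ hT.subtree v u) :
    Disjoint (hT.subtree v u) (hT.subtree v y) :=
  Set.disjoint_left.mpr fun _ hxu hxy => (hT.mem_subtree_or_mem_subtree hxu hxy).elim hu hy

lemma connected_induce_subtree : (T.induce (hT.subtree v u)).Connected :=
  connected_induce_of_forall_walk hT.self_mem_subtree fun x hx =>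
    ⟨hT.path u x, fun _ hy => (hT.mem_subtree_of_mem_support hx hy).1⟩

lemma connected_induce_subtree_diff {B : Set V} (hB : ∀ y ∈ B, hT.subtree v y ⊆ B)
    (hr : r ∉ B) : (T.induce (hT.subtree v r \ B)).Connected :=
  connected_induce_of_forall_walk ⟨hT.self_mem_subtree, hr⟩ fun x hx =>
    ⟨hT.path r x, fun y hy =>
      have ⟨hyr, hxy⟩ := hT.mem_subtree_of_mem_support hx.1 hy
      ⟨hyr, fun hyB => hx.2 (hB y hyB hxy)⟩⟩

lemma exists_adj_mem_subtree (hx : x ∈ hT.subtree v u) (hne : x ≠ u) :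
    ∃ c, T.Adj u c ∧ c ∈ hT.subtree v u ∧ x ∈ hT.subtree v c := by
  have hnil := Walk.not_nil_of_ne hne.symm (p := hT.path u x)
  exact ⟨_, Walk.adj_snd hnil,
    hT.mem_subtree_of_mem_support hx (Walk.getVert_mem_support _ _)⟩

lemma exists_adj_notMem_subtree (hu : u ∈ hT.subtree v r) (hne : u ≠ r) :
    ∃ p, T.Adj p u ∧ p ∈ hT.subtree v r ∧ u ∈ hT.subtree v p ∧ p ∉ hT.subtree v u := by
  have hnil := Walk.not_nil_of_ne hne.symm (p := hT.path r u)
  have hadj := Walk.adj_penultimate hnil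
  obtain ⟨hpr, hup⟩ := hT.mem_subtree_of_mem_support hu (Walk.getVert_mem_support _ _)
  exact ⟨_, hadj, hpr, hup, fun hp => hadj.ne (hT.eq_of_mem_subtree_of_mem_subtree hup hp)⟩

lemma exists_adj_mem_subtree_diff (hu : u ∈ hT.subtree v r) (hy : y ∈ hT.subtree v r)
    (huy : u ∉ hT.subtree v y) (hyu : y ∉ hT.subtree v u) :
    ∃ p ∈ hT.subtree v r \ (hT.subtree v u ∪ hT.subtree v y), T.Adj p u := by
  obtain ⟨p, hpu, hpr, hup, hpu'⟩ := hT.exists_adj_notMem_subtree hu fun h => hyu (h ▸ hy)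
  exact ⟨p, ⟨hpr, fun hp => hp.elim hpu' fun hp => huy (hT.subtree_subset_of_mem hp hup)⟩, hpu⟩

end SimpleGraph.IsTree

section CompleteBinaryTree

variable {k : ℕ}

/-- The copy of `w` on the `b`-side of the root. Children prepend a bit, so the side of a
vertex is its last bit. -/
def cbtBranch (b : Bool) (w : cbtVert k) : cbtVert (k + 1) :=
  ⟨w.1.concat b, by simpa using w.2⟩

lemma cbtVert_zero_eq_root (w : cbtVert 0) : w = cbtRoot 0 :=
  Subtype.ext (List.eq_nil_of_length_eq_zero (Nat.le_zero.mp w.2))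

lemma cbtVert_succ_cases (w : cbtVert (k + 1)) :
    w = cbtRoot (k + 1) ∨ ∃ b a, w = cbtBranch b a := by
  obtain ⟨l, hl⟩ := w
  rcases List.eq_nil_or_concat l with rfl | ⟨t, b, rfl⟩
  · exact Or.inl rfl
  · exact Or.inr ⟨b, ⟨t, by simpa using hl⟩, rfl⟩

lemma cbtBranch_inj {b b' : Bool} {w w' : cbtVert k} :
    cbtBranch b w = cbtBranch b' w' ↔ b = b' ∧ w = w' := by
  refine ⟨fun h => ?_, fun ⟨hb, hw⟩ => hb ▸ hw ▸ rfl⟩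
  have := congrArg Subtype.val h
  simp only [cbtBranch, List.concat_eq_append] at this
  obtain ⟨hw, hb⟩ := List.append_inj' this rfl
  exact ⟨by simpa using hb, Subtype.ext hw⟩

lemma completeBinaryTree_adj {w w' : cbtVert k} :
    (completeBinaryTree k).Adj w w' ↔
      w ≠ w' ∧ ((∃ x, w'.1 = x :: w.1) ∨ (∃ x, w.1 = x :: w'.1)) :=
  SimpleGraph.fromRel_adj _ w w'

lemma completeBinaryTree_child_cases {w w' : cbtVert (k + 1)} {x : Bool}
    (hx : w'.1 = x :: w.1) :
    (w = cbtRoot (k + 1) ∧ w' = cbtBranch x (cbtRoot k)) ∨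
      ∃ b a a', (completeBinaryTree k).Adj a a' ∧ w = cbtBranch b a ∧ w' = cbtBranch b a' := by
  rcases cbtVert_succ_cases w with rfl | ⟨b, a, rfl⟩
  · exact Or.inl ⟨rfl, Subtype.ext hx⟩
  · have hlen : (x :: a.1).length ≤ k := by simpa [hx, cbtBranch] using w'.2
    refine Or.inr ⟨b, a, ⟨x :: a.1, hlen⟩, ?_, rfl, Subtype.ext hx⟩
    refine completeBinaryTree_adj.mpr ⟨fun h => ?_, Or.inl ⟨x, rfl⟩⟩
    simpa using congrArg (fun z : cbtVert k => z.1.length) h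

end CompleteBinaryTree

namespace SimpleGraph

variable {V : Type*} (T : SimpleGraph V)

def HasRootedBinaryTreeMinorIn (A : Set V) (r : V) (k : ℕ) : Prop :=
  ∃ f : cbtVert k → Set V, (∀ w, f w ⊆ A) ∧ r ∈ f (cbtRoot k) ∧
    (∀ w, (T.induce (f w)).Connected) ∧
    (Pairwise fun w w' => Disjoint (f w) (f w')) ∧
    ∀ ⦃w w'⦄, (completeBinaryTree k).Adj w w' → ∃ a ∈ f w, ∃ b ∈ f w', T.Adj a b

variable {T} {k : ℕ} {A D : Set V} {r : V}

lemma HasRootedBinaryTreeMinorIn.hasRootedMinor (h : T.HasRootedBinaryTreeMinorIn A r k) :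
    HasRootedMinor T r (completeBinaryTree k) (cbtRoot k) :=
  let ⟨f, _, hr, hconn, hdisj, hadj⟩ := h
  ⟨f, hr, hconn, hdisj, hadj⟩

lemma hasRootedBinaryTreeMinorIn_zero (hr : r ∈ A) (hA : (T.induce A).Connected) :
    T.HasRootedBinaryTreeMinorIn A r 0 := by
  refine ⟨fun _ => A, fun _ => subset_rfl, hr, fun _ => hA, fun w w' hne => ?_,
    fun w w' hadj => ?_⟩
  · exact absurd ((cbtVert_zero_eq_root w).trans (cbtVert_zero_eq_root w').symm) hne
  · exact absurd ((cbtVert_zero_eq_root w).trans (cbtVert_zero_eq_root w').symm) hadj.ne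

def glueModels (D : Set V) (f : Bool → cbtVert k → Set V) (w : cbtVert (k + 1)) : Set V :=
  if hw : w.1 = [] then D
  else f (w.1.getLast hw) ⟨w.1.dropLast, by have := w.2; simp only [List.length_dropLast]; omega⟩

lemma glueModels_root (f : Bool → cbtVert k → Set V) :
    glueModels D f (cbtRoot (k + 1)) = D := dif_pos rfl

lemma glueModels_branch (f : Bool → cbtVert k → Set V) (b : Bool) (w : cbtVert k) :
    glueModels D f (cbtBranch b w) = f b w := by
  rw [glueModels, dif_neg (by simp [cbtBranch])]
  congr <;> simp [cbtBranch]

lemma pairwise_disjoint_glueModels {S : Bool → Set V} {f : Bool → cbtVert k → Set V}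
    (hDS : ∀ b, Disjoint D (S b)) (hS : Disjoint (S true) (S false))
    (hfS : ∀ b w, f b w ⊆ S b) (hf : ∀ b, Pairwise fun w w' => Disjoint (f b w) (f b w')) :
    Pairwise fun w w' => Disjoint (glueModels D f w) (glueModels D f w') := by
  intro w w' hne
  rcases cbtVert_succ_cases w with rfl | ⟨b, a, rfl⟩ <;>
    rcases cbtVert_succ_cases w' with rfl | ⟨b', a', rfl⟩ <;>
    simp only [glueModels_root, glueModels_branch]
  · exact absurd rfl hne
  · exact (hDS b').mono_right (hfS b' a')
  · exact ((hDS b).mono_right (hfS b a)).symm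
  · by_cases hb : b = b'
    · subst hb
      exact hf b fun ha => hne (cbtBranch_inj.mpr ⟨rfl, ha⟩)
    · refine Disjoint.mono (hfS b a) (hfS b' a') ?_
      cases b <;> cases b' <;> first | exact absurd rfl hb | exact hS | exact hS.symm

lemma exists_adj_glueModels {f : Bool → cbtVert k → Set V} {u : Bool → V}
    (hDu : ∀ b, ∃ a ∈ D, T.Adj a (u b)) (hfu : ∀ b, u b ∈ f b (cbtRoot k))
    (hf : ∀ b ⦃w w'⦄, (completeBinaryTree k).Adj w w' → ∃ a ∈ f b w, ∃ a' ∈ f b w', T.Adj a a')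
    {w w' : cbtVert (k + 1)} (hww' : (completeBinaryTree (k + 1)).Adj w w') :
    ∃ a ∈ glueModels D f w, ∃ a' ∈ glueModels D f w', T.Adj a a' := by
  wlog hchild : ∃ x, w'.1 = x :: w.1 generalizing w w'
  · obtain ⟨a, ha, a', ha', hadj⟩ :=
      this hww'.symm ((completeBinaryTree_adj.mp hww').2.resolve_left hchild)
    exact ⟨a', ha', a, ha, hadj.symm⟩
  obtain ⟨x, hx⟩ := hchild
  rcases completeBinaryTree_child_cases hx with ⟨rfl, rfl⟩ | ⟨b, a, a', haa', rfl, rfl⟩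
  · obtain ⟨p, hp, hpu⟩ := hDu x
    rw [glueModels_root, glueModels_branch]
    exact ⟨p, hp, u x, hfu x, hpu⟩
  · rw [glueModels_branch, glueModels_branch]
    exact hf b haa'

lemma hasRootedBinaryTreeMinorIn_succ {S : Bool → Set V} {u : Bool → V} (hDA : D ⊆ A)
    (hSA : ∀ b, S b ⊆ A) (hr : r ∈ D) (hD : (T.induce D).Connected)
    (hDS : ∀ b, Disjoint D (S b)) (hS : Disjoint (S true) (S false))
    (hDu : ∀ b, ∃ a ∈ D, T.Adj a (u b))
    (hmodel : ∀ b, T.HasRootedBinaryTreeMinorIn (S b) (u b) k) :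
    T.HasRootedBinaryTreeMinorIn A r (k + 1) := by
  choose f hfS hfu hconn hdisj hadj using hmodel
  refine ⟨glueModels D f, fun w => ?_, by rwa [glueModels_root], fun w => ?_,
    pairwise_disjoint_glueModels hDS hS hfS hdisj, fun _ _ => exists_adj_glueModels hDu hfu hadj⟩
  · rcases cbtVert_succ_cases w with rfl | ⟨b, a, rfl⟩
    · rwa [glueModels_root]
    · rw [glueModels_branch]
      exact (hfS b a).trans (hSA b)
  · rcases cbtVert_succ_cases w with rfl | ⟨b, a, rfl⟩
    · rwa [glueModels_root]
    · rw [glueModels_branch]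
      exact hconn b a

end SimpleGraph

namespace SimpleGraph.IsTree

variable {V : Type*} {T : SimpleGraph V} (hT : T.IsTree) {v r : V}

lemma hasRootedBinaryTreeMinorIn_subtree_succ {u₁ u₂ : V} {k : ℕ} (hu₁ : u₁ ∈ hT.subtree v r)
    (hu₂ : u₂ ∈ hT.subtree v r) (h₁₂ : u₁ ∉ hT.subtree v u₂) (h₂₁ : u₂ ∉ hT.subtree v u₁)
    (h₁ : T.HasRootedBinaryTreeMinorIn (hT.subtree v u₁) u₁ k)
    (h₂ : T.HasRootedBinaryTreeMinorIn (hT.subtree v u₂) u₂ k) :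
    T.HasRootedBinaryTreeMinorIn (hT.subtree v r) r (k + 1) := by
  have hr : r ∉ hT.subtree v u₁ ∪ hT.subtree v u₂ := by
    rintro (hr | hr)
    · exact h₂₁ (hT.eq_of_mem_subtree_of_mem_subtree hu₁ hr ▸ hu₂)
    · exact h₁₂ (hT.eq_of_mem_subtree_of_mem_subtree hu₂ hr ▸ hu₁)
  have hD := hT.connected_induce_subtree_diff (B := hT.subtree v u₁ ∪ hT.subtree v u₂)
    (fun y hy => hy.elim (fun hy => (hT.subtree_subset_of_mem hy).trans subset_union_left)
      fun hy => (hT.subtree_subset_of_mem hy).trans subset_union_right) hr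
  have hp₁ := hT.exists_adj_mem_subtree_diff hu₁ hu₂ h₁₂ h₂₁
  have hp₂ := hT.exists_adj_mem_subtree_diff hu₂ hu₁ h₂₁ h₁₂
  rw [union_comm] at hp₂
  refine hasRootedBinaryTreeMinorIn_succ (u := fun b => bif b then u₁ else u₂)
    (S := fun b => hT.subtree v (bif b then u₁ else u₂)) sdiff_subset
    (Bool.forall_bool.mpr ⟨hT.subtree_subset_of_mem hu₂, hT.subtree_subset_of_mem hu₁⟩)
    ⟨hT.self_mem_subtree, hr⟩ hD
    (Bool.forall_bool.mpr ⟨disjoint_sdiff_left.mono_right subset_union_right,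
      disjoint_sdiff_left.mono_right subset_union_left⟩)
    (hT.disjoint_subtree h₁₂ h₂₁) (Bool.forall_bool.mpr ⟨hp₂, hp₁⟩)
    (Bool.forall_bool.mpr ⟨h₂, h₁⟩)

lemma ncard_le_of_isChain {h : ℕ} (hheight : ∀ u, T.dist v u ≤ h) {S : Set V}
    (hS : IsChain (fun a b => b ∈ hT.subtree v a) S) : S.ncard ≤ h + 1 := by
  have hinj : InjOn (T.dist v) S := by
    intro a ha b hb hab
    by_contra hne
    rcases hS ha hb hne with hba | hab'
    · have := hT.dist_eq_add_of_mem_subtree hba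
      exact hne (hT.connected.dist_eq_zero_iff.mp (by omega))
    · have := hT.dist_eq_add_of_mem_subtree hab'
      exact hne (hT.connected.dist_eq_zero_iff.mp (by omega)).symm
  calc S.ncard ≤ (↑(Finset.range (h + 1)) : Set ℕ).ncard :=
        ncard_le_ncard_of_injOn _ (fun a _ => by simpa using Nat.lt_succ_of_le (hheight a)) hinj
          (Finset.finite_toSet _)
    _ = h + 1 := by rw [ncard_coe_finset, Finset.card_range]

variable [Finite V]

lemma subtree_subset_union_biUnion {H : Set V} (hr : r ∈ H) :
    hT.subtree v r ⊆
      H ∪ ⋃ u ∈ H, ⋃ c ∈ {c | T.Adj u c ∧ c ∈ hT.subtree v u ∧ c ∉ H}, hT.subtree v c := by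
  intro x hx
  by_cases hxH : x ∈ H
  · exact Or.inl hxH
  obtain ⟨u, ⟨huH, hxu⟩, hmax⟩ := Set.Finite.exists_maximalFor (T.dist v)
    {u | u ∈ H ∧ x ∈ hT.subtree v u} (toFinite _) ⟨r, hr, hx⟩
  obtain ⟨c, huc, hcu, hxc⟩ := hT.exists_adj_mem_subtree hxu fun h => hxH (h ▸ huH)
  have hcH : c ∉ H := fun hcH => by
    have hdist := hT.dist_eq_add_of_mem_subtree hcu
    have hpos := hT.connected.pos_dist_of_ne huc.ne
    have := hmax ⟨hcH, hxc⟩ (by omega)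
    omega
  exact Or.inr (mem_biUnion huH (mem_biUnion (x := c) ⟨huc, hcu, hcH⟩ hxc))

variable {h Δ : ℕ}

lemma ncard_subtree_le_of_isChain (hheight : ∀ u, T.dist v u ≤ h)
    (hdeg : ∀ u, (T.neighborSet u).ncard ≤ Δ) {M : ℕ} (hr : M < (hT.subtree v r).ncard)
    (hchain : IsChain (fun a b => b ∈ hT.subtree v a)
      {x | x ∈ hT.subtree v r ∧ M < (hT.subtree v x).ncard}) :
    (hT.subtree v r).ncard ≤ (h + 1) * (1 + Δ * M) := by
  set H := {x | x ∈ hT.subtree v r ∧ M < (hT.subtree v x).ncard}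
  set light := fun u => ⋃ c ∈ {c | T.Adj u c ∧ c ∈ hT.subtree v u ∧ c ∉ H}, hT.subtree v c
  have hH : H.ncard ≤ h + 1 := hT.ncard_le_of_isChain hheight hchain
  have hlight : ∀ u ∈ H, (light u).ncard ≤ Δ * M := by
    intro u hu
    refine (ncard_biUnion_le_ncard_mul (toFinite _) fun c hc => ?_).trans
      (Nat.mul_le_mul_right M ((ncard_le_ncard fun c hc => hc.1).trans (hdeg u)))
    exact not_lt.mp fun hlt => hc.2.2 ⟨hT.subtree_subset_of_mem hu.1 hc.2.1, hlt⟩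
  calc (hT.subtree v r).ncard
      ≤ (H ∪ ⋃ u ∈ H, light u).ncard :=
        ncard_le_ncard (hT.subtree_subset_union_biUnion ⟨hT.self_mem_subtree, hr⟩)
    _ ≤ H.ncard + H.ncard * (Δ * M) :=
        (ncard_union_le _ _).trans
          (Nat.add_le_add_left (ncard_biUnion_le_ncard_mul (toFinite _) hlight) _)
    _ = H.ncard * (1 + Δ * M) := by ring
    _ ≤ (h + 1) * (1 + Δ * M) := Nat.mul_le_mul_right _ hH

theorem hasRootedBinaryTreeMinorIn_subtree_of_lt_ncard (hheight : ∀ u, T.dist v u ≤ h)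
    (hdeg : ∀ u, (T.neighborSet u).ncard ≤ Δ) (k : ℕ) (r : V)
    (hr : ((h + 1) * (Δ + 1)) ^ k < (hT.subtree v r).ncard) :
    T.HasRootedBinaryTreeMinorIn (hT.subtree v r) r k := by
  induction k generalizing r with
  | zero => exact hasRootedBinaryTreeMinorIn_zero hT.self_mem_subtree hT.connected_induce_subtree
  | succ k ih =>
    rw [pow_succ] at hr
    set M := ((h + 1) * (Δ + 1)) ^ k
    by_cases hchain : IsChain (fun a b => b ∈ hT.subtree v a)
        {x | x ∈ hT.subtree v r ∧ M < (hT.subtree v x).ncard}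
    · have hM : 0 < M := by positivity
      have := hT.ncard_subtree_le_of_isChain hheight hdeg
        ((Nat.le_mul_of_pos_right M (by positivity)).trans_lt hr) hchain
      have : (h + 1) * (1 + Δ * M) ≤ M * ((h + 1) * (Δ + 1)) := by nlinarith
      omega
    · simp only [IsChain, Set.Pairwise, mem_ofPred_eq, ne_eq, and_imp, not_forall,
        not_or] at hchain
      obtain ⟨u₁, hu₁r, hu₁, u₂, hu₂r, hu₂, -, h₂₁, h₁₂⟩ := hchain
      exact hT.hasRootedBinaryTreeMinorIn_subtree_succ hu₁r hu₂r h₁₂ h₂₁ (ih u₁ hu₁) (ih u₂ hu₂)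

end SimpleGraph.IsTree

/-- If the rooted tree `(T, v)` has height at most `h`, maximum degree at most `Δ`, and
does not contain the complete binary tree of height `k+1` as a rooted minor, then
`|T| ≤ (h+1)^(k+1) · (Δ+1)^(k+1)`. -/
theorem rooted_tree_size_bound {V : Type} [Fintype V] (T : SimpleGraph V) (hT : T.IsTree)
    (v : V) (h Δ k : ℕ)
    (hheight : ∀ u, T.dist v u ≤ h)
    (hdeg : ∀ u, (T.neighborSet u).ncard ≤ Δ)
    (hnominor : ¬ HasRootedMinor T v (completeBinaryTree (k + 1)) (cbtRoot (k + 1))) :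
    Fintype.card V ≤ (h + 1) ^ (k + 1) * (Δ + 1) ^ (k + 1) := by
  by_contra! hcard
  have hbig : ((h + 1) * (Δ + 1)) ^ (k + 1) < (hT.subtree v v).ncard := by
    rwa [hT.subtree_root, ncard_univ, Nat.card_eq_fintype_card, mul_pow]
  exact hnominor
    (hT.hasRootedBinaryTreeMinorIn_subtree_of_lt_ncard hheight hdeg (k + 1) v hbig).hasRootedMinor
end

section
/- Let G₁, G₂, G₃ be three connected graphs, each with pathwidth at least k, and let vᵢ ∈ V(Gᵢ) for i = 1, 2, 3. Let G be obtained from the disjoint union of G₁, G₂, G₃ by adding a new vertex v adjacent to v₁, v₂, v₃. Then G has pathwidth at least k+1. -/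
open SimpleGraph Set

/-- The graph obtained from the disjoint union of `G 0, G 1, G 2` by adding a new vertex
(`none`) adjacent to the chosen vertex `v i` of each `G i`. -/
def glueGraph {Vs : Fin 3 → Type} (G : ∀ i, SimpleGraph (Vs i)) (v : ∀ i, Vs i) :
    SimpleGraph (Option (Σ i, Vs i)) :=
  SimpleGraph.fromRel fun a b =>
    (∃ i x y, a = some ⟨i, x⟩ ∧ b = some ⟨i, y⟩ ∧ (G i).Adj x y) ∨
    (a = none ∧ ∃ i, b = some ⟨i, v i⟩)

lemma Set.ncard_preimage_lt_of_injective {α β : Type*} {f : α → β} (hf : Function.Injective f)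
    {s : Set β} (hs : s.Finite) {u : β} (hu : u ∈ s) (hur : u ∉ range f) :
    (f ⁻¹' s).ncard < s.ncard := by
  rw [← ncard_image_of_injective _ hf, image_preimage_eq_inter_range]
  exact ncard_lt_ncard (inter_subset_left.ssubset_of_not_subset fun h => hur (h hu).2) hs

lemma exists_median_fin_three {α : Type*} [LinearOrder α] (a : Fin 3 → α) :
    ∃ m l r : Fin 3, l ≠ m ∧ r ≠ m ∧ a l ≤ a m ∧ a m ≤ a r :=
  have hmono := Tuple.monotone_sort a
  ⟨Tuple.sort a 1, Tuple.sort a 0, Tuple.sort a 2, (Tuple.sort a).injective.ne (by decide),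
    (Tuple.sort a).injective.ne (by decide), hmono (by decide), hmono (by decide)⟩

section PathDecomposition

variable {V : Type*} {G : SimpleGraph V}

namespace IsPathDecompOn

variable {p : ℕ} {B : Fin p → Set V}

lemma comap {W : Type*} {H : SimpleGraph W} (f : H →g G) (hB : IsPathDecompOn G univ p B) :
    IsPathDecompOn H univ p fun j => f ⁻¹' B j :=
  ⟨fun _ => subset_univ _, fun x _ => hB.2.1 (f x) trivial,
    fun _ _ hxy _ _ => hB.2.2.1 (f.map_rel hxy) trivial trivial, fun x => hB.2.2.2 (f x)⟩

lemma exists_mem_support_mem_of_le_of_le (hB : IsPathDecompOn G univ p B) {a b : V}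
    (w : G.Walk a b) {ja j jb : Fin p} (hja : ja ≤ j) (hjb : j ≤ jb)
    (ha : a ∈ B ja) (hb : b ∈ B jb) : ∃ u ∈ w.support, u ∈ B j := by
  induction w generalizing ja with
  | nil => exact ⟨_, Walk.start_mem_support _, hB.2.2.2 _ ja j jb hja hjb ha hb⟩
  | @cons x y _ hxy w ih =>
    obtain ⟨j', hx, hy⟩ := hB.2.2.1 hxy trivial trivial
    rcases le_total j j' with hle | hle
    · exact ⟨x, Walk.start_mem_support _, hB.2.2.2 x ja j j' hja hle ha hx⟩
    · obtain ⟨u, hu, huB⟩ := ih hle hy hb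
      exact ⟨u, Walk.support_cons _ _ ▸ List.mem_cons_of_mem x hu, huB⟩

lemma pathwidth_le (hB : IsPathDecompOn G univ p B) {t : ℕ} (hsize : ∀ j, (B j).ncard ≤ t + 1) :
    pathwidth G ≤ t :=
  Nat.sInf_le ⟨p, B, hB, hsize⟩

lemma exists_lt_ncard_of_le_pathwidth [Finite V] [Nonempty V] (hB : IsPathDecompOn G univ p B)
    {k : ℕ} (hk : k ≤ pathwidth G) : ∃ j, k < (B j).ncard := by
  by_contra! hsmall
  cases k with
  | zero =>
    obtain ⟨j, hj⟩ := hB.2.1 (Classical.arbitrary V) trivial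
    exact ((ncard_pos (toFinite _)).2 ⟨_, hj⟩).ne' (Nat.le_zero.1 (hsmall j))
  | succ t => exact absurd (hB.pathwidth_le hsmall) (by omega)

end IsPathDecompOn

lemma le_pathwidth_of_forall_exists_lt_ncard [Finite V] {k : ℕ}
    (h : ∀ p (B : Fin p → Set V), IsPathDecompOn G univ p B → ∃ j, k < (B j).ncard) :
    k ≤ pathwidth G := by
  have hdecomp : IsPathDecompOn G univ 1 fun _ => univ :=
    ⟨fun _ => subset_rfl, fun _ _ => ⟨0, trivial⟩, fun _ _ _ _ _ => ⟨0, trivial, trivial⟩,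
      fun _ _ _ _ _ _ _ h => h⟩
  refine le_csInf ⟨Nat.card V, 1, _, hdecomp, fun _ => by simp [ncard_univ]⟩ ?_
  rintro t ⟨p, B, hB, hsize⟩
  obtain ⟨j, hj⟩ := h p B hB
  have := hsize j
  omega

end PathDecomposition

section Glue

variable {Vs : Fin 3 → Type} (G : ∀ i, SimpleGraph (Vs i)) (v : ∀ i, Vs i)

def glueHom (i : Fin 3) : G i →g glueGraph G v where
  toFun x := some ⟨i, x⟩
  map_rel' h := ⟨by simp [h.ne], Or.inl (Or.inl ⟨i, _, _, rfl, rfl, h⟩)⟩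

lemma glueHom_apply (i : Fin 3) (x : Vs i) : glueHom G v i x = some ⟨i, x⟩ :=
  rfl

lemma glueHom_injective (i : Fin 3) : Function.Injective (glueHom G v i) :=
  fun x y hxy => by simpa [glueHom_apply] using hxy

lemma glueGraph_adj_none_glueHom (i : Fin 3) : (glueGraph G v).Adj none (glueHom G v i (v i)) :=
  ⟨by simp [glueHom_apply], Or.inl (Or.inr ⟨rfl, i, rfl⟩)⟩

lemma exists_walk_none_glueHom {i : Fin 3} (hconn : (G i).Connected) (x : Vs i) :
    ∃ w : (glueGraph G v).Walk none (glueHom G v i x),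
      ∀ u ∈ w.support, ∀ j ≠ i, u ∉ range (glueHom G v j) := by
  obtain ⟨w⟩ := hconn.preconnected (v i) x
  refine ⟨.cons (glueGraph_adj_none_glueHom G v i) (w.map (glueHom G v i)), ?_⟩
  rintro u hu j hji ⟨y, rfl⟩
  simp only [Walk.support_cons, Walk.support_map, List.mem_cons, List.mem_map] at hu
  rcases hu with hu | ⟨z, -, hz⟩
  · simp [glueHom_apply] at hu
  · exact hji (congrArg Sigma.fst (Option.some_inj.1 hz)).symm

end Glue

/-- If `G 0, G 1, G 2` are connected graphs each with pathwidth at least `k`, then adding a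
new vertex adjacent to one vertex of each yields a graph of pathwidth at least `k + 1`. -/
theorem pathwidth_glue {Vs : Fin 3 → Type} [∀ i, Fintype (Vs i)]
    (G : ∀ i, SimpleGraph (Vs i)) (v : ∀ i, Vs i) (k : ℕ)
    (hconn : ∀ i, (G i).Connected) (hpw : ∀ i, k ≤ pathwidth (G i)) :
    k + 1 ≤ pathwidth (glueGraph G v) := by
  refine le_pathwidth_of_forall_exists_lt_ncard fun p B hB => ?_
  have heavy i : ∃ j, k < (glueHom G v i ⁻¹' B j).ncard :=
    haveI := (hconn i).nonempty
    (hB.comap (glueHom G v i)).exists_lt_ncard_of_le_pathwidth (hpw i)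
  choose a ha using heavy
  -- A vertex of part `l` in bag `a l` and one of part `r` in bag `a r` are joined through `none`
  -- avoiding part `m`, so the median bag `a m` holds a vertex outside part `m` besides its more
  -- than `k` vertices of part `m`.
  obtain ⟨m, l, r, hlm, hrm, hal, har⟩ := exists_median_fin_three a
  obtain ⟨x, hx⟩ := nonempty_of_ncard_ne_zero (Nat.zero_lt_of_lt (ha l)).ne'
  obtain ⟨y, hy⟩ := nonempty_of_ncard_ne_zero (Nat.zero_lt_of_lt (ha r)).ne'
  obtain ⟨wl, hwl⟩ := exists_walk_none_glueHom G v (hconn l) x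
  obtain ⟨wr, hwr⟩ := exists_walk_none_glueHom G v (hconn r) y
  obtain ⟨u, hu, huB⟩ := hB.exists_mem_support_mem_of_le_of_le (wl.reverse.append wr) hal har hx hy
  have hum : u ∉ range (glueHom G v m) := by
    rw [Walk.mem_support_append_iff, Walk.support_reverse, List.mem_reverse] at hu
    exact hu.elim (hwl u · m hlm.symm) (hwr u · m hrm.symm)
  exact ⟨a m, lt_of_le_of_lt (ha m)
    (ncard_preimage_lt_of_injective (glueHom_injective G v m) (toFinite _) huB hum)⟩
end
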